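/- arXiv:2505.10086 — 9 statements merged into one kernel-verified Lean document; each statement's English description precedes it below -/
import Mathlib

section
/- Let A and B be backward weighted shift operators on a separable Hilbert space H with orthonormal basis {e_i}_{i≥0}, with nonzero weight sequences {a_i} and {b_i} (i.e., A e_0 = 0, A e_{i+1} = a_i e_i, and similarly for B). If a bounded operator X satisfies XA = BX, then X is nonzero if and only if X* is injective (equivalently, X has dense range). -/
/-!
Let `M i j = ⟪e i, X e j⟫` be the matrix of `X`. The relation `X A = B X` read entrywise gives
`a j * M i j = b i * M (i+1) (j+1)` and `b i * M (i+1) 0 = 0`; since all weights are nonzero,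
`M` vanishes below the diagonal and each diagonal `M i (n+i)` is a nonzero multiple of `M 0 n`.
If `X ≠ 0`, let `k` be the first index with `M 0 k ≠ 0`: then `M i j = 0` for `j < k + i`
while `M i (k+i) ≠ 0`. For `y ∈ ker X*` the coefficients `c i = ⟪y, e i⟫` satisfy
`∑ c i M i j = ⟪y, X e j⟫ = 0` for every `j`, and taking `j = k, k+1, …` in turn kills them one
at a time, so `y = 0`. Finally `ker X* = (range X)ᗮ`, so injectivity of `X*` is dense range.
-/

open scoped InnerProductSpace ComplexConjugate

theorem eq_zero_of_tsum_mul_eq_zero {R : Type*} [NonUnitalNonAssocSemiring R] [NoZeroDivisors R]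
    [TopologicalSpace R] {M : ℕ → ℕ → R} {c : ℕ → R} (k : ℕ)
    (hlow : ∀ i j, j < k + i → M i j = 0) (hdiag : ∀ i, M i (k + i) ≠ 0)
    (hc : ∀ j, ∑' i, c i * M i j = 0) : c = 0 := by
  suffices ∀ m, c m = 0 from funext this
  intro m
  induction m using Nat.strong_induction_on with
  | _ m ih =>
    have hsingle : ∀ i ≠ m, c i * M i (k + m) = 0 := by
      intro i hi
      rcases hi.lt_or_gt with hlt | hgt
      · rw [ih i hlt, zero_mul]
      · rw [hlow i _ (by omega), mul_zero]
    have := hc (k + m)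
    rw [tsum_eq_single m hsingle] at this
    exact (mul_eq_zero.mp this).resolve_right (hdiag m)

section Intertwining

variable {R : Type*} [Semiring R]

/-- The entrywise form of `M * A = B * M` for the matrices of backward weighted shifts with
weights `a` and `b`: column `0` of `M * A` is zero and column `j + 1` is `a j` times column `j`
of `M`, while row `i` of `B * M` is `b i` times row `i + 1` of `M`. -/
structure IsIntertwiningMatrix (a b : ℕ → R) (M : ℕ → ℕ → R) : Prop where
  mul_apply_succ_zero : ∀ i, b i * M (i + 1) 0 = 0
  mul_apply : ∀ i j, a j * M i j = b i * M (i + 1) (j + 1)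

namespace IsIntertwiningMatrix

variable [NoZeroDivisors R] {a b : ℕ → R} {M : ℕ → ℕ → R}

theorem apply_eq_zero_of_lt (hM : IsIntertwiningMatrix a b M) (hb : ∀ i, b i ≠ 0) {i j : ℕ}
    (hji : j < i) : M i j = 0 := by
  induction j generalizing i with
  | zero =>
    obtain ⟨i, rfl⟩ := Nat.exists_eq_succ_of_ne_zero (Nat.ne_zero_of_lt hji)
    exact (mul_eq_zero.mp (hM.mul_apply_succ_zero i)).resolve_left (hb i)
  | succ j ih =>
    obtain ⟨i, rfl⟩ := Nat.exists_eq_succ_of_ne_zero (Nat.ne_zero_of_lt hji)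
    have := hM.mul_apply i j
    rw [ih (by omega), mul_zero, eq_comm, mul_eq_zero] at this
    exact this.resolve_left (hb i)

theorem apply_add_eq_zero_iff (hM : IsIntertwiningMatrix a b M) (ha : ∀ i, a i ≠ 0)
    (hb : ∀ i, b i ≠ 0) (n i : ℕ) : M i (n + i) = 0 ↔ M 0 n = 0 := by
  induction i with
  | zero => rfl
  | succ i ih =>
    calc M (i + 1) (n + (i + 1)) = 0 ↔ b i * M (i + 1) (n + i + 1) = 0 := by
          simp [hb, add_assoc]
      _ ↔ a (n + i) * M i (n + i) = 0 := by rw [hM.mul_apply]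
      _ ↔ M 0 n = 0 := by simp [ha, ih]

theorem eq_zero_of_row_zero (hM : IsIntertwiningMatrix a b M) (ha : ∀ i, a i ≠ 0)
    (hb : ∀ i, b i ≠ 0) (h : ∀ n, M 0 n = 0) : M = 0 := by
  funext i j
  rcases lt_or_ge j i with hji | hij
  · exact hM.apply_eq_zero_of_lt hb hji
  · obtain ⟨n, rfl⟩ := Nat.exists_eq_add_of_le' hij
    exact (hM.apply_add_eq_zero_iff ha hb n i).mpr (h n)

theorem exists_shifted_triangular (hM : IsIntertwiningMatrix a b M) (ha : ∀ i, a i ≠ 0)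
    (hb : ∀ i, b i ≠ 0) (hrow : ∃ n, M 0 n ≠ 0) :
    ∃ k, (∀ i j, j < k + i → M i j = 0) ∧ ∀ i, M i (k + i) ≠ 0 := by
  classical
  refine ⟨Nat.find hrow, fun i j hj => ?_, fun i => ?_⟩
  · rcases lt_or_ge j i with hji | hij
    · exact hM.apply_eq_zero_of_lt hb hji
    · obtain ⟨n, rfl⟩ := Nat.exists_eq_add_of_le' hij
      exact (hM.apply_add_eq_zero_iff ha hb n i).mpr
        (not_not.mp (Nat.find_min hrow (by omega)))
  · exact (hM.apply_add_eq_zero_iff ha hb _ i).not.mpr (Nat.find_spec hrow)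

end IsIntertwiningMatrix

end Intertwining

section InnerProductSpace

variable {𝕜 H : Type*} [RCLike 𝕜] [NormedAddCommGroup H] [InnerProductSpace 𝕜 H]

namespace HilbertBasis

variable {ι : Type*} (v : HilbertBasis ι 𝕜 H)

theorem eq_zero_of_forall_inner_eq_zero {x : H} (h : ∀ i, ⟪v i, x⟫_𝕜 = 0) : x = 0 := by
  have hsum := v.hasSum_inner_mul_inner x x
  simp only [h, mul_zero] at hsum
  exact inner_self_eq_zero.mp (hsum.unique hasSum_zero)

theorem clm_eq_zero_of_forall_apply_eq_zero {T : H →L[𝕜] H} (h : ∀ i, T (v i) = 0) :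
    T = 0 :=
  ContinuousLinearMap.ext_on (Submodule.dense_iff_topologicalClosure_eq_top.mpr v.dense_span)
    (fun _ ⟨i, hi⟩ => hi ▸ h i)

end HilbertBasis

namespace ContinuousLinearMap

variable {E F : Type*} [NormedAddCommGroup E] [InnerProductSpace 𝕜 E] [CompleteSpace E]
  [NormedAddCommGroup F] [InnerProductSpace 𝕜 F] [CompleteSpace F]

theorem injective_adjoint_iff_denseRange (T : E →L[𝕜] F) :
    Function.Injective (adjoint T) ↔ DenseRange T := by
  rw [← coe_coe (adjoint T), ← LinearMap.ker_eq_bot, ← orthogonal_range,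
    ← Submodule.topologicalClosure_eq_top_iff, ← Submodule.dense_iff_topologicalClosure_eq_top,
    LinearMap.coe_range, DenseRange, coe_coe]

theorem ne_zero_of_injective_adjoint [Nontrivial F] {T : E →L[𝕜] F}
    (hT : Function.Injective (adjoint T)) : T ≠ 0 := by
  rintro rfl
  obtain ⟨x, hx⟩ := exists_ne (0 : F)
  exact hx (hT (by simp))

end ContinuousLinearMap

structure IsBackwardWeightedShift (v : HilbertBasis ℕ 𝕜 H) (w : ℕ → 𝕜) (T : H →L[𝕜] H) :
    Prop where
  apply_zero : T (v 0) = 0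
  apply_succ : ∀ i, T (v (i + 1)) = w i • v i

namespace IsBackwardWeightedShift

variable [CompleteSpace H] {v : HilbertBasis ℕ 𝕜 H} {w : ℕ → 𝕜} {T : H →L[𝕜] H}

theorem adjoint_apply (hT : IsBackwardWeightedShift v w T) (i : ℕ) :
    ContinuousLinearMap.adjoint T (v i) = conj (w i) • v (i + 1) := by
  rw [← sub_eq_zero]
  refine v.eq_zero_of_forall_inner_eq_zero fun j => ?_
  rw [inner_sub_right, ContinuousLinearMap.adjoint_inner_right, inner_smul_right, sub_eq_zero]
  cases j with
  | zero => simp [hT.apply_zero, v.orthonormal.inner_eq_zero (Nat.succ_ne_zero i).symm]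
  | succ j =>
    have hv := orthonormal_iff_ite.mp v.orthonormal
    rw [hT.apply_succ, inner_smul_left, hv, hv]
    rcases eq_or_ne j i with rfl | hji <;> simp [*]

theorem inner_apply (hT : IsBackwardWeightedShift v w T) (i : ℕ) (x : H) :
    ⟪v i, T x⟫_𝕜 = w i * ⟪v (i + 1), x⟫_𝕜 := by
  rw [← ContinuousLinearMap.adjoint_inner_left, hT.adjoint_apply, inner_smul_left,
    RCLike.conj_conj]

end IsBackwardWeightedShift

section WeightedShift

variable [CompleteSpace H] {v : HilbertBasis ℕ 𝕜 H} {a b : ℕ → 𝕜} {A B X : H →L[𝕜] H}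

theorem isIntertwiningMatrix_inner (hA : IsBackwardWeightedShift v a A)
    (hB : IsBackwardWeightedShift v b B) (hX : X ∘L A = B ∘L X) :
    IsIntertwiningMatrix a b fun i j => ⟪v i, X (v j)⟫_𝕜 where
  mul_apply_succ_zero i := by
    have := congr(⟪v i, $hX (v 0)⟫_𝕜)
    simpa only [ContinuousLinearMap.comp_apply, hA.apply_zero, map_zero, inner_zero_right,
      hB.inner_apply, eq_comm] using this
  mul_apply i j := by
    have := congr(⟪v i, $hX (v (j + 1))⟫_𝕜)
    simpa only [ContinuousLinearMap.comp_apply, hA.apply_succ, map_smul, inner_smul_right,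
      hB.inner_apply] using this

theorem injective_adjoint_of_intertwining (hA : IsBackwardWeightedShift v a A)
    (hB : IsBackwardWeightedShift v b B) (hX : X ∘L A = B ∘L X) (ha : ∀ i, a i ≠ 0)
    (hb : ∀ i, b i ≠ 0) (hX0 : X ≠ 0) : Function.Injective (ContinuousLinearMap.adjoint X) := by
  have hM := isIntertwiningMatrix_inner hA hB hX
  have hrow : ∃ n, ⟪v 0, X (v n)⟫_𝕜 ≠ 0 := by
    by_contra! h
    have hM0 := hM.eq_zero_of_row_zero ha hb h
    refine hX0 (v.clm_eq_zero_of_forall_apply_eq_zero fun j => ?_)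
    exact v.eq_zero_of_forall_inner_eq_zero fun i => congrFun₂ hM0 i j
  obtain ⟨k, hlow, hdiag⟩ := hM.exists_shifted_triangular ha hb hrow
  refine (injective_iff_map_eq_zero _).mpr fun y hy => ?_
  have hcoef : (fun i => ⟪y, v i⟫_𝕜) = 0 := by
    refine eq_zero_of_tsum_mul_eq_zero k hlow hdiag fun j => ?_
    rw [v.tsum_inner_mul_inner, ← ContinuousLinearMap.adjoint_inner_left, hy, inner_zero_left]
  refine v.eq_zero_of_forall_inner_eq_zero fun i => ?_
  rw [← inner_conj_symm, congrFun hcoef i, Pi.zero_apply, map_zero]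

end WeightedShift

end InnerProductSpace

/-- Let `A`, `B` be backward weighted shifts on a separable complex Hilbert
space `H` with orthonormal basis `e`, with nonzero weight sequences `a`, `b`. If a bounded
operator `X` satisfies `X A = B X`, then `X ≠ 0` iff `X*` is injective, which is also
equivalent to `X` having dense range. -/
theorem stmt0 {H : Type*} [NormedAddCommGroup H] [InnerProductSpace ℂ H] [CompleteSpace H]
    (e : ℕ → H) (he : Orthonormal ℂ e)
    (hdense : (Submodule.span ℂ (Set.range e)).topologicalClosure = ⊤)
    (a b : ℕ → ℂ) (ha : ∀ i, a i ≠ 0) (hb : ∀ i, b i ≠ 0)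
    (A B X : H →L[ℂ] H)
    (hA0 : A (e 0) = 0) (hA : ∀ i, A (e (i + 1)) = a i • e i)
    (hB0 : B (e 0) = 0) (hB : ∀ i, B (e (i + 1)) = b i • e i)
    (hX : X ∘L A = B ∘L X) :
    (X ≠ 0 ↔ Function.Injective (ContinuousLinearMap.adjoint X)) ∧
      (X ≠ 0 ↔ DenseRange X) := by
  have : Nontrivial H := ⟨e 0, 0, he.ne_zero 0⟩
  obtain ⟨v, rfl⟩ : ∃ v : HilbertBasis ℕ ℂ H, ⇑v = e :=
    ⟨_, HilbertBasis.coe_mk he hdense.ge⟩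
  have hinj : X ≠ 0 ↔ Function.Injective (ContinuousLinearMap.adjoint X) :=
    ⟨injective_adjoint_of_intertwining ⟨hA0, hA⟩ ⟨hB0, hB⟩ hX ha hb,
      ContinuousLinearMap.ne_zero_of_injective_adjoint⟩
  exact ⟨hinj, hinj.trans X.injective_adjoint_iff_denseRange⟩
end

section
/- Let A and B be backward weighted shift operators on a Hilbert space H with weight sequences {a_i}_{i≥0} and {b_i}_{i≥0}. If a bounded operator X satisfies AX = XB, then with respect to the orthonormal basis {e_i}, the matrix entries x_{i,j} = ⟨X e_j, e_i⟩ satisfy x_{i,j} = 0 whenever i > j (i.e., X is upper triangular). -/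
/-!
Testing a backward weighted shift `A` against `e i` reads off `a i` times the `(i + 1)`-st
coordinate (its adjoint is the forward shift). Taking the `(i, j)` entry of `A X = X B` therefore
expresses `a i • x_{i+1,j}` as `b (j - 1) • x_{i,j-1}`, or as `0` when `j = 0`; since `a i ≠ 0`,
induction on the column `j` makes every entry below the diagonal vanish.
-/

section

variable {𝕜 H : Type*} [RCLike 𝕜] [NormedAddCommGroup H] [InnerProductSpace 𝕜 H]

open scoped InnerProductSpace

def IsBackwardWeightedShift_s1 (e : ℕ → H) (a : ℕ → 𝕜) (A : H →L[𝕜] H) : Prop :=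
  A (e 0) = 0 ∧ ∀ i, A (e (i + 1)) = a i • e i

namespace IsBackwardWeightedShift_s1

variable {e : ℕ → H} {a : ℕ → 𝕜} {A : H →L[𝕜] H}

theorem inner_basis_apply_eq_mul_inner_succ (hA : IsBackwardWeightedShift_s1 e a A)
    (he : Orthonormal 𝕜 e) (hdense : (Submodule.span 𝕜 (Set.range e)).topologicalClosure = ⊤)
    (i : ℕ) (y : H) : ⟪e i, A y⟫_𝕜 = a i * ⟪e (i + 1), y⟫_𝕜 := by
  have hd : Dense (Submodule.span 𝕜 (Set.range e) : Set H) := by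
    rwa [Submodule.dense_iff_topologicalClosure_eq_top]
  have hfun : (innerSL 𝕜 (e i)).comp A = a i • innerSL 𝕜 (e (i + 1)) := by
    refine ContinuousLinearMap.ext_on hd ?_
    rintro _ ⟨k, rfl⟩
    rcases k with _ | k
    · simp [hA.1, orthonormal_iff_ite.mp he]
    · simp only [ContinuousLinearMap.comp_apply, smul_apply,
        innerSL_apply_apply, hA.2 k, inner_smul_right, orthonormal_iff_ite.mp he]
      by_cases h : i = k <;> simp [h]
  simpa using congr($hfun y)

end IsBackwardWeightedShift_s1

theorem inner_basis_apply_eq_zero_of_intertwines {e : ℕ → H} {a b : ℕ → 𝕜}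
    {A B X : H →L[𝕜] H} (hA : IsBackwardWeightedShift_s1 e a A) (hB : IsBackwardWeightedShift_s1 e b B)
    (he : Orthonormal 𝕜 e) (hdense : (Submodule.span 𝕜 (Set.range e)).topologicalClosure = ⊤)
    (ha : ∀ i, a i ≠ 0) (hX : A ∘L X = X ∘L B) {i j : ℕ} (hji : j < i) :
    ⟪e i, X (e j)⟫_𝕜 = 0 := by
  obtain ⟨i, rfl⟩ : ∃ i', i = i' + 1 := ⟨i - 1, by omega⟩
  have hrow : a i * ⟪e (i + 1), X (e j)⟫_𝕜 = ⟪e i, X (B (e j))⟫_𝕜 := by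
    rw [← hA.inner_basis_apply_eq_mul_inner_succ he hdense, ← ContinuousLinearMap.comp_apply,
      hX, ContinuousLinearMap.comp_apply]
  refine (mul_eq_zero.mp ?_).resolve_left (ha i)
  rw [hrow]
  rcases j with _ | j
  · simp [hB.1]
  · rw [hB.2 j, map_smul, inner_smul_right,
      inner_basis_apply_eq_zero_of_intertwines hA hB he hdense ha hX (by omega), mul_zero]

end

theorem stmt1_general {H : Type*} [NormedAddCommGroup H] [InnerProductSpace ℂ H]
    (e : ℕ → H) (he : Orthonormal ℂ e)
    (hdense : (Submodule.span ℂ (Set.range e)).topologicalClosure = ⊤)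
    (a b : ℕ → ℂ) (ha : ∀ i, a i ≠ 0)
    (A B X : H →L[ℂ] H)
    (hA0 : A (e 0) = 0) (hA : ∀ i, A (e (i + 1)) = a i • e i)
    (hB0 : B (e 0) = 0) (hB : ∀ i, B (e (i + 1)) = b i • e i)
    (hX : A ∘L X = X ∘L B) :
    ∀ i j : ℕ, j < i → (inner ℂ (e i) (X (e j)) : ℂ) = 0 :=
  fun _ _ hji => inner_basis_apply_eq_zero_of_intertwines ⟨hA0, hA⟩ ⟨hB0, hB⟩ he hdense ha hX hji

/-- Let `A`, `B` be backward weighted shifts on `H` with (nonzero) weight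
sequences `a`, `b`. If a bounded operator `X` satisfies `A X = X B`, then the matrix entries
`x_{i,j} = ⟨X e_j, e_i⟩` vanish whenever `i > j`, i.e. `X` is upper triangular. -/
theorem stmt1 {H : Type*} [NormedAddCommGroup H] [InnerProductSpace ℂ H] [CompleteSpace H]
    (e : ℕ → H) (he : Orthonormal ℂ e)
    (hdense : (Submodule.span ℂ (Set.range e)).topologicalClosure = ⊤)
    (a b : ℕ → ℂ) (ha : ∀ i, a i ≠ 0) (hb : ∀ i, b i ≠ 0)
    (A B X : H →L[ℂ] H)
    (hA0 : A (e 0) = 0) (hA : ∀ i, A (e (i + 1)) = a i • e i)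
    (hB0 : B (e 0) = 0) (hB : ∀ i, B (e (i + 1)) = b i • e i)
    (hX : A ∘L X = X ∘L B) :
    ∀ i j : ℕ, j < i → (inner ℂ (e i) (X (e j)) : ℂ) = 0 :=
  stmt1_general e he hdense a b ha A B X hA0 hA hB0 hB hX
end

section
/- Let T be a bounded operator on a Hilbert space. If a bounded operator P satisfies both TP = PT and P = TY − YT for some bounded operator Y (i.e., P ∈ ker τ_T ∩ ran τ_T), then P is quasi-nilpotent: lim_{n→∞} ‖P^n‖^{1/n} = 0. -/
/-!
`ad T = τ_T` is a derivation with `ad T Y = P` and `ad T P = 0`, so in Leibniz's rule for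
`(ad T)ⁿ⁺¹ (Y * X)` only two terms survive; by induction `(ad T)ⁿ (Yⁿ) = n! • Pⁿ`. Since
`‖ad T‖ ≤ 2‖T‖`, this gives `n! ‖Pⁿ‖ ≤ (2‖T‖‖Y‖)ⁿ`, and `n! ≥ (n / e)ⁿ` turns it into
`‖Pⁿ‖^(1/n) ≤ 2e‖T‖‖Y‖ / n`.
-/

open Filter LieAlgebra
open scoped Nat

attribute [local instance] LieRing.ofAssociativeRing

section Ring

variable {A : Type*} [Ring A] {T P Y : A}

theorem ad_apply_eq_mul_sub_mul (X : A) : ad ℤ A T X = T * X - X * T := by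
  rw [ad_apply, Ring.lie_def]

theorem ad_pow_mul_left_of_commute (hP : Commute T P) (k : ℕ) (X : A) :
    (ad ℤ A T ^ k) (P * X) = P * (ad ℤ A T ^ k) X := by
  induction k generalizing X with
  | zero => rfl
  | succ k ih =>
    rw [pow_succ, Module.End.mul_apply, Module.End.mul_apply, ad_apply_eq_mul_sub_mul,
      ad_apply_eq_mul_sub_mul, ← ih, ← mul_assoc, hP.eq, mul_assoc, mul_assoc, ← mul_sub]

theorem ad_pow_succ_mul (hP : Commute T P) (hY : ⁅T, Y⁆ = P) (m : ℕ) (X : A) :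
    (ad ℤ A T ^ (m + 1)) (Y * X) =
      Y * (ad ℤ A T ^ (m + 1)) X + (m + 1) • (P * (ad ℤ A T ^ m) X) := by
  have hYX (X : A) : ad ℤ A T (Y * X) = Y * ad ℤ A T X + P * X := by
    rw [ad_apply_eq_mul_sub_mul, ad_apply_eq_mul_sub_mul, ← hY, Ring.lie_def]
    noncomm_ring
  induction m generalizing X with
  | zero => simpa using hYX X
  | succ m ih =>
    rw [pow_succ, Module.End.mul_apply, hYX, map_add, ih, ad_pow_mul_left_of_commute hP,
      ← Module.End.mul_apply, ← pow_succ, ← Module.End.mul_apply, ← pow_succ, add_assoc,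
      succ_nsmul _ (m + 1)]

theorem ad_pow_apply_pow (hP : Commute T P) (hY : ⁅T, Y⁆ = P) (n : ℕ) :
    (ad ℤ A T ^ n) (Y ^ n) = n ! • P ^ n ∧ (ad ℤ A T ^ (n + 1)) (Y ^ n) = 0 := by
  induction n with
  | zero => simp [Ring.lie_def]
  | succ n ih =>
    have hvanish : (ad ℤ A T ^ (n + 2)) (Y ^ n) = 0 := by
      rw [pow_succ', Module.End.mul_apply, ih.2, map_zero]
    rw [pow_succ' Y, ad_pow_succ_mul hP hY, ad_pow_succ_mul hP hY, ih.1, ih.2, hvanish]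
    refine ⟨?_, by simp⟩
    rw [mul_zero, zero_add, mul_smul_comm, smul_smul, ← pow_succ', Nat.factorial_succ]

end Ring

theorem tendsto_rpow_inv_of_factorial_mul_le {a : ℕ → ℝ} {c : ℝ} (ha : ∀ n, 0 ≤ a n)
    (hc : 0 ≤ c) (h : ∀ n ≠ 0, n ! * a n ≤ c ^ n) :
    Tendsto (fun n : ℕ => a n ^ (n : ℝ)⁻¹) atTop (nhds 0) := by
  have hce (n : ℕ) : 0 ≤ c * Real.exp 1 / n := by positivity
  have hbound : ∀ n ≠ 0, a n ≤ (c * Real.exp 1 / n) ^ n := by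
    intro n hn
    have hn' : (0 : ℝ) < n := by positivity
    have hfactorial : (n : ℝ) ^ n ≤ n ! * Real.exp 1 ^ n := by
      have := Real.pow_div_factorial_le_exp (n : ℝ) hn'.le n
      rwa [← Real.exp_one_pow, div_le_iff₀ (by positivity), mul_comm] at this
    rw [div_pow, mul_pow, le_div_iff₀ (by positivity)]
    calc a n * n ^ n ≤ a n * (n ! * Real.exp 1 ^ n) := by gcongr; exact ha n
      _ = (n ! * a n) * Real.exp 1 ^ n := by ring
      _ ≤ c ^ n * Real.exp 1 ^ n := by gcongr; exact h n hn
  refine tendsto_of_tendsto_of_tendsto_of_le_of_le' tendsto_const_nhds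
    (tendsto_const_div_atTop_nhds_zero_nat (c * Real.exp 1))
    (Eventually.of_forall fun n => Real.rpow_nonneg (ha n) _) ?_
  filter_upwards [eventually_ne_atTop 0] with n hn
  calc a n ^ (n : ℝ)⁻¹ ≤ ((c * Real.exp 1 / n) ^ n) ^ (n : ℝ)⁻¹ := by
        gcongr
        · exact ha n
        · exact hbound n hn
    _ = c * Real.exp 1 / n := Real.pow_rpow_inv_natCast (hce n) hn

section NormedRing

variable {A : Type*} [NormedRing A] {T P Y : A}

theorem norm_ad_le (X : A) : ‖ad ℤ A T X‖ ≤ 2 * ‖T‖ * ‖X‖ :=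
  calc ‖ad ℤ A T X‖ ≤ ‖T * X‖ + ‖X * T‖ := by
        rw [ad_apply_eq_mul_sub_mul]; exact norm_sub_le _ _
    _ ≤ ‖T‖ * ‖X‖ + ‖X‖ * ‖T‖ := add_le_add (norm_mul_le _ _) (norm_mul_le _ _)
    _ = 2 * ‖T‖ * ‖X‖ := by ring

theorem norm_ad_pow_le (X : A) (n : ℕ) : ‖(ad ℤ A T ^ n) X‖ ≤ (2 * ‖T‖) ^ n * ‖X‖ := by
  induction n with
  | zero => simp
  | succ n ih =>
    calc ‖(ad ℤ A T ^ (n + 1)) X‖ ≤ 2 * ‖T‖ * ‖(ad ℤ A T ^ n) X‖ := by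
          rw [pow_succ', Module.End.mul_apply]; exact norm_ad_le _
      _ ≤ 2 * ‖T‖ * ((2 * ‖T‖) ^ n * ‖X‖) := by gcongr
      _ = (2 * ‖T‖) ^ (n + 1) * ‖X‖ := by ring

theorem factorial_mul_norm_pow_le [NormedAlgebra ℝ A] (hP : Commute T P) (hY : ⁅T, Y⁆ = P)
    {n : ℕ} (hn : n ≠ 0) :
    n ! * ‖P ^ n‖ ≤ (2 * ‖T‖ * ‖Y‖) ^ n :=
  calc n ! * ‖P ^ n‖ = ‖(ad ℤ A T ^ n) (Y ^ n)‖ := by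
        rw [(ad_pow_apply_pow hP hY n).1, ← Nat.cast_smul_eq_nsmul ℝ, norm_smul,
          Real.norm_natCast]
    _ ≤ (2 * ‖T‖) ^ n * ‖Y ^ n‖ := norm_ad_pow_le _ _
    _ ≤ (2 * ‖T‖) ^ n * ‖Y‖ ^ n := by gcongr; exact norm_pow_le' _ (Nat.pos_of_ne_zero hn)
    _ = (2 * ‖T‖ * ‖Y‖) ^ n := by ring

theorem tendsto_norm_pow_rpow_inv_of_commute_of_lie_eq [NormedAlgebra ℝ A] (hP : Commute T P)
    (hY : ⁅T, Y⁆ = P) :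
    Tendsto (fun n : ℕ => ‖P ^ n‖ ^ (n : ℝ)⁻¹) atTop (nhds 0) :=
  tendsto_rpow_inv_of_factorial_mul_le (fun _ => norm_nonneg _) (by positivity)
    fun _ hn => factorial_mul_norm_pow_le hP hY hn

end NormedRing

theorem stmt3_general {H : Type*} [NormedAddCommGroup H] [InnerProductSpace ℂ H]
    (T P Y : H →L[ℂ] H) (h1 : T * P = P * T) (h2 : P = T * Y - Y * T) :
    Filter.Tendsto (fun n : ℕ => ‖P ^ n‖ ^ ((n : ℝ)⁻¹)) Filter.atTop (nhds 0) :=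
  tendsto_norm_pow_rpow_inv_of_commute_of_lie_eq h1 (by rw [Ring.lie_def, h2])

/-- **Kleinecke–Shirokov.** If a bounded operator `P` on a Hilbert space
commutes with `T` and `P = T Y − Y T` for some bounded `Y`, then `P` is quasi-nilpotent:
`‖P^n‖^{1/n} → 0`. -/
theorem stmt3 {H : Type*} [NormedAddCommGroup H] [InnerProductSpace ℂ H] [CompleteSpace H]
    (T P Y : H →L[ℂ] H) (h1 : T * P = P * T) (h2 : P = T * Y - Y * T) :
    Filter.Tendsto (fun n : ℕ => ‖P ^ n‖ ^ ((n : ℝ)⁻¹)) Filter.atTop (nhds 0) :=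
  stmt3_general T P Y h1 h2
end

section
/- Let T be an injective unilateral weighted shift on H^2(β) (realized as multiplication by z) with spectral radius r(T) ≠ 0. Then the commutant algebra {T}' contains no nonzero quasi-nilpotent operator. -/
/-!
Expand a vector in the power series `∑ ⟪e n, y⟫ / β n • z ^ n`, where `β n = ∏_{i<n} w i`, so
that `e n` is `z ^ n / β n`. Then `T` is multiplication by `z`, and an operator `X` commuting
with `T` is multiplication by `φ`, the series of `X (e 0)`. If `φ ≠ 0` has order `n` and leading
coefficient `c`, the entries `⟪e (k + n m), X ^ m (e k)⟫ = c ^ m β (k + n m) / β k` give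
`‖X ^ m‖ ≥ |c| ^ m ‖T ^ (n m)‖`, because the norm of a weighted shift is the supremum of its
weights. With `‖T ^ (n m)‖ ≥ r(T) ^ (n m)` this keeps `‖X ^ m‖ ^ (1 / m)` above
`|c| r(T) ^ n > 0`.
-/

/-- An operator is quasi-nilpotent if `‖P^n‖^{1/n} → 0` (spectral radius zero). -/
def QuasiNilpotent {H : Type*} [NormedAddCommGroup H] [NormedSpace ℂ H]
    (P : H →L[ℂ] H) : Prop :=
  Filter.Tendsto (fun n : ℕ => ‖P ^ n‖ ^ ((n : ℝ)⁻¹)) Filter.atTop (nhds 0)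

open Finset Filter PowerSeries
open scoped InnerProductSpace PowerSeries.WithPiTopology

theorem Orthonormal.opNorm_le_of_apply_eq_smul {𝕜 H ι : Type*} [RCLike 𝕜]
    [NormedAddCommGroup H] [InnerProductSpace 𝕜 H] {e : ι → H} (he : Orthonormal 𝕜 e)
    (hd : Dense (Submodule.span 𝕜 (Set.range e) : Set H)) {σ : ι → ι} (hσ : σ.Injective)
    {a : ι → 𝕜} {S : H →L[𝕜] H} (hS : ∀ i, S (e i) = a i • e (σ i)) {s : ℝ} (hs : 0 ≤ s)
    (ha : ∀ i, ‖a i‖ ≤ s) : ‖S‖ ≤ s := by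
  refine S.opNorm_le_bound hs fun x => hd.induction (P := fun x => ‖S x‖ ≤ s * ‖x‖) ?_
    (isClosed_le (by fun_prop) (by fun_prop)) x
  intro x hx
  obtain ⟨l, rfl⟩ := Finsupp.mem_span_range_iff_exists_finsupp.mp hx
  have hSl : S (l.sum fun i c => c • e i) = ∑ i ∈ l.support, (l i * a i) • e (σ i) := by
    simp [Finsupp.sum, map_sum, hS, smul_smul]
  have hsq : ‖S (l.sum fun i c => c • e i)‖ ^ 2 ≤ (s * ‖l.sum fun i c => c • e i‖) ^ 2 := by
    have h1 := (he.comp σ hσ).orthogonalFamily.norm_sum (fun i => l i * a i) l.support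
    have h2 := he.orthogonalFamily.norm_sum l l.support
    simp only [LinearIsometry.toSpanSingleton_apply, Function.comp_apply] at h1 h2
    rw [hSl, h1, mul_pow, Finsupp.sum, h2, Finset.mul_sum]
    gcongr with i
    rw [norm_mul, mul_pow, mul_comm]
    gcongr
    exact ha i
  exact (pow_le_pow_iff_left₀ (norm_nonneg _) (by positivity) two_ne_zero).mp hsq

theorem pow_toReal_spectralRadius_le_norm_pow {𝕜 A : Type*} [NontriviallyNormedField 𝕜]
    [NormedRing A] [NormedAlgebra 𝕜 A] [CompleteSpace A] [NormOneClass A] (a : A) (n : ℕ) :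
    (spectralRadius 𝕜 a).toReal ^ n ≤ ‖a ^ n‖ := by
  have : Nontrivial A := NormOneClass.nontrivial
  rw [← ENNReal.toReal_pow, ← coe_nnnorm]
  exact ENNReal.toReal_le_coe_of_le_coe <|
    (spectrum.spectralRadius_pow_le' a n).trans (spectrum.spectralRadius_le_nnnorm _)

theorem PowerSeries.coeff_order_mul_pow {R : Type*} [CommSemiring R] (φ : R⟦X⟧) (m : ℕ) :
    coeff (φ.order.toNat * m) (φ ^ m) = coeff φ.order.toNat φ ^ m := by
  calc coeff (φ.order.toNat * m) (φ ^ m)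
      = coeff (0 + φ.order.toNat * m) (X ^ (φ.order.toNat * m) * φ.divXPowOrder ^ m) := by
        rw [zero_add, pow_mul, ← mul_pow, X_pow_order_mul_divXPowOrder]
    _ = coeff φ.order.toNat φ ^ m := by
        rw [coeff_X_pow_mul, coeff_zero_eq_constantCoeff, map_pow, constantCoeff_divXPowOrder]

theorem QuasiNilpotent.eq_zero_of_pow_le_norm_pow {H : Type*} [NormedAddCommGroup H]
    [NormedSpace ℂ H] {P : H →L[ℂ] H} (hP : QuasiNilpotent P) {a : ℝ} (ha : 0 ≤ a)
    (h : ∀ m : ℕ, a ^ m ≤ ‖P ^ m‖) : a = 0 := by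
  refine le_antisymm (ge_of_tendsto hP ?_) ha
  filter_upwards [eventually_ne_atTop 0] with m hm
  calc a = (a ^ m) ^ (m : ℝ)⁻¹ := by
        rw [← Real.rpow_natCast, ← Real.rpow_mul ha, mul_inv_cancel₀ (by positivity), Real.rpow_one]
    _ ≤ ‖P ^ m‖ ^ (m : ℝ)⁻¹ := by gcongr; exact h m

noncomputable def PowerSeries.mulLeftCLM {R : Type*} [CommSemiring R] [TopologicalSpace R]
    [IsTopologicalSemiring R] (φ : R⟦X⟧) : R⟦X⟧ →L[R] R⟦X⟧ :=
  ⟨LinearMap.mulLeft R φ, continuous_const.mul continuous_id⟩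

@[simp]
theorem PowerSeries.mulLeftCLM_apply {R : Type*} [CommSemiring R] [TopologicalSpace R]
    [IsTopologicalSemiring R] (φ ψ : R⟦X⟧) : mulLeftCLM φ ψ = φ * ψ :=
  rfl

namespace WeightedShift

def weightProd (w : ℕ → ℂ) (n : ℕ) : ℂ := ∏ i ∈ range n, w i

variable {w : ℕ → ℂ}

theorem weightProd_zero : weightProd w 0 = 1 := prod_range_zero w

theorem weightProd_succ (n : ℕ) : weightProd w (n + 1) = weightProd w n * w n :=
  prod_range_succ w n

theorem weightProd_ne_zero (hw : ∀ n, w n ≠ 0) (n : ℕ) : weightProd w n ≠ 0 :=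
  prod_ne_zero_iff.mpr fun i _ => hw i

variable {H : Type*} [NormedAddCommGroup H] [InnerProductSpace ℂ H] {e : ℕ → H}
  {T : H →L[ℂ] H}

theorem pow_apply_basis (hw : ∀ n, w n ≠ 0) (hT : ∀ n, T (e n) = w n • e (n + 1)) (N i : ℕ) :
    (T ^ N) (e i) = (weightProd w (i + N) / weightProd w i) • e (i + N) := by
  induction N with
  | zero => simp [div_self (weightProd_ne_zero hw i)]
  | succ N ih =>
    rw [pow_succ', mul_apply_eq_comp, ih, map_smul, hT, smul_smul, ← add_assoc,
      weightProd_succ, mul_div_right_comm]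

theorem norm_pow_le_of_forall_le (he : Orthonormal ℂ e)
    (hd : Dense (Submodule.span ℂ (Set.range e) : Set H)) (hw : ∀ n, w n ≠ 0)
    (hT : ∀ n, T (e n) = w n • e (n + 1)) {M : ℕ} {s : ℝ} (hs : 0 ≤ s)
    (h : ∀ k, ‖weightProd w (k + M) / weightProd w k‖ ≤ s) : ‖T ^ M‖ ≤ s :=
  he.opNorm_le_of_apply_eq_smul hd (add_left_injective M) (pow_apply_basis hw hT M) hs h

variable (e w) in
/-- `H` realised as `H²(β)`: the vector `e n` is the monomial `z ^ n / weightProd w n`. -/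
noncomputable def toPowerSeries : H →L[ℂ] ℂ⟦X⟧ where
  toFun y := PowerSeries.mk fun n => ⟪e n, y⟫_ℂ / weightProd w n
  map_add' y z := by ext n; simp [add_div]
  map_smul' c y := by ext n; simp [mul_div_assoc]
  cont := continuous_pi fun s =>
    (by fun_prop : Continuous fun y : H => ⟪e (s ()), y⟫_ℂ / weightProd w (s ()))

@[simp]
theorem coeff_toPowerSeries (n : ℕ) (y : H) :
    coeff n (toPowerSeries w e y) = ⟪e n, y⟫_ℂ / weightProd w n :=
  coeff_mk n fun n => ⟪e n, y⟫_ℂ / weightProd w n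

theorem toPowerSeries_apply_basis (he : Orthonormal ℂ e) (i : ℕ) :
    toPowerSeries w e (e i) = monomial i (weightProd w i)⁻¹ := by
  ext n
  rw [coeff_toPowerSeries, orthonormal_iff_ite.mp he, coeff_monomial]
  split_ifs with h <;> simp [h]

theorem eq_zero_of_toPowerSeries_eq_zero (hd : Dense (Submodule.span ℂ (Set.range e) : Set H))
    (hw : ∀ n, w n ≠ 0) {y : H} (hy : toPowerSeries w e y = 0) : y = 0 := by
  have : innerSL ℂ y = 0 := by
    refine ContinuousLinearMap.ext_on hd ?_
    rintro _ ⟨n, rfl⟩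
    have := congr(coeff n $hy)
    rw [coeff_toPowerSeries, map_zero, div_eq_zero_iff, inner_eq_zero_symm] at this
    simpa using this.resolve_right (weightProd_ne_zero hw n)
  simpa using congr($this y)

theorem toPowerSeries_apply_shift (he : Orthonormal ℂ e)
    (hd : Dense (Submodule.span ℂ (Set.range e) : Set H)) (hw : ∀ n, w n ≠ 0)
    (hT : ∀ n, T (e n) = w n • e (n + 1)) (y : H) :
    toPowerSeries w e (T y) = X * toPowerSeries w e y := by
  have : (toPowerSeries w e).comp T = (mulLeftCLM X).comp (toPowerSeries w e) := by
    refine ContinuousLinearMap.ext_on hd ?_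
    rintro _ ⟨i, rfl⟩
    rw [ContinuousLinearMap.comp_apply, ContinuousLinearMap.comp_apply, hT, map_smul,
      toPowerSeries_apply_basis he, toPowerSeries_apply_basis he, mulLeftCLM_apply, X_eq,
      monomial_mul_monomial, add_comm 1 i, one_mul, ← map_smul, weightProd_succ, smul_eq_mul]
    congr 1
    field_simp [hw i, weightProd_ne_zero hw i]
  exact congr($this y)

theorem toPowerSeries_apply_pow_shift (he : Orthonormal ℂ e)
    (hd : Dense (Submodule.span ℂ (Set.range e) : Set H)) (hw : ∀ n, w n ≠ 0)
    (hT : ∀ n, T (e n) = w n • e (n + 1)) (k : ℕ) (y : H) :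
    toPowerSeries w e ((T ^ k) y) = X ^ k * toPowerSeries w e y := by
  induction k with
  | zero => simp
  | succ k ih =>
    rw [pow_succ', mul_apply_eq_comp, toPowerSeries_apply_shift he hd hw hT, ih, pow_succ',
      mul_assoc]

theorem toPowerSeries_apply_of_commute (he : Orthonormal ℂ e)
    (hd : Dense (Submodule.span ℂ (Set.range e) : Set H)) (hw : ∀ n, w n ≠ 0)
    (hT : ∀ n, T (e n) = w n • e (n + 1)) {A : H →L[ℂ] H} (hA : Commute T A) (y : H) :
    toPowerSeries w e (A y) = toPowerSeries w e (A (e 0)) * toPowerSeries w e y := by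
  have : (toPowerSeries w e).comp A =
      (mulLeftCLM (toPowerSeries w e (A (e 0)))).comp (toPowerSeries w e) := by
    refine ContinuousLinearMap.ext_on hd ?_
    rintro _ ⟨i, rfl⟩
    have hei : e i = (weightProd w i)⁻¹ • (T ^ i) (e 0) := by
      rw [pow_apply_basis hw hT, weightProd_zero, div_one, zero_add, smul_smul,
        inv_mul_cancel₀ (weightProd_ne_zero hw i), one_smul]
    rw [ContinuousLinearMap.comp_apply, ContinuousLinearMap.comp_apply, mulLeftCLM_apply,
      toPowerSeries_apply_basis he, hei, map_smul, ← mul_apply_eq_comp, ← (hA.pow_left i).eq,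
      mul_apply_eq_comp, map_smul, toPowerSeries_apply_pow_shift he hd hw hT, smul_eq_C_mul,
      monomial_eq_C_mul_X_pow]
    ring
  exact congr($this y)

theorem toPowerSeries_apply_pow_of_apply {A : H →L[ℂ] H} {φ : ℂ⟦X⟧}
    (hφ : ∀ y, toPowerSeries w e (A y) = φ * toPowerSeries w e y) (m : ℕ) (y : H) :
    toPowerSeries w e ((A ^ m) y) = φ ^ m * toPowerSeries w e y := by
  induction m with
  | zero => simp
  | succ m ih => rw [pow_succ', mul_apply_eq_comp, hφ, ih, pow_succ', mul_assoc]

theorem norm_coeff_order_pow_mul_norm_div_le (he : Orthonormal ℂ e) (hw : ∀ n, w n ≠ 0)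
    {A : H →L[ℂ] H} {φ : ℂ⟦X⟧} (hφ : ∀ y, toPowerSeries w e (A y) = φ * toPowerSeries w e y)
    (m k : ℕ) :
    ‖coeff φ.order.toNat φ‖ ^ m * ‖weightProd w (k + φ.order.toNat * m) / weightProd w k‖ ≤
      ‖A ^ m‖ := by
  set n := φ.order.toNat with hn
  have hentry : ⟪e (k + n * m), (A ^ m) (e k)⟫_ℂ =
      weightProd w (k + n * m) / weightProd w k * coeff n φ ^ m := by
    have := congr(coeff (n * m + k) $(toPowerSeries_apply_pow_of_apply hφ m (e k)))
    rw [coeff_toPowerSeries, toPowerSeries_apply_basis he, monomial_eq_C_mul_X_pow, ← mul_assoc,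
      coeff_mul_X_pow, coeff_mul_C, coeff_order_mul_pow, add_comm,
      div_eq_iff (weightProd_ne_zero hw _), ← hn] at this
    rw [this]
    field_simp [weightProd_ne_zero hw k]
  calc ‖coeff n φ‖ ^ m * ‖weightProd w (k + n * m) / weightProd w k‖
      = ‖⟪e (k + n * m), (A ^ m) (e k)⟫_ℂ‖ := by rw [hentry, norm_mul, norm_pow, mul_comm]
    _ ≤ ‖e (k + n * m)‖ * (‖A ^ m‖ * ‖e k‖) :=
        (norm_inner_le_norm _ _).trans (by gcongr; exact (A ^ m).le_opNorm _)
    _ = ‖A ^ m‖ := by rw [he.norm_eq_one, he.norm_eq_one, one_mul, mul_one]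

theorem norm_coeff_order_pow_mul_norm_shift_pow_le (he : Orthonormal ℂ e)
    (hd : Dense (Submodule.span ℂ (Set.range e) : Set H)) (hw : ∀ n, w n ≠ 0)
    (hT : ∀ n, T (e n) = w n • e (n + 1)) {A : H →L[ℂ] H} {φ : ℂ⟦X⟧}
    (hφ : ∀ y, toPowerSeries w e (A y) = φ * toPowerSeries w e y) (hφ₀ : φ ≠ 0) (m : ℕ) :
    ‖coeff φ.order.toNat φ‖ ^ m * ‖T ^ (φ.order.toNat * m)‖ ≤ ‖A ^ m‖ := by
  have hc : 0 < ‖coeff φ.order.toNat φ‖ ^ m := pow_pos (norm_pos_iff.mpr (coeff_order hφ₀)) m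
  rw [mul_comm, ← le_div_iff₀ hc]
  refine norm_pow_le_of_forall_le he hd hw hT (by positivity) fun k => ?_
  rw [le_div_iff₀ hc, mul_comm]
  exact norm_coeff_order_pow_mul_norm_div_le he hw hφ m k

end WeightedShift

open WeightedShift

/-- Let `T` be an injective unilateral (forward) weighted shift with nonzero
weights and spectral radius `r(T) ≠ 0`. Then the commutant of `T` contains no nonzero
quasi-nilpotent operator. -/
theorem stmt5 {H : Type*} [NormedAddCommGroup H] [InnerProductSpace ℂ H] [CompleteSpace H]
    (e : ℕ → H) (he : Orthonormal ℂ e)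
    (hdense : (Submodule.span ℂ (Set.range e)).topologicalClosure = ⊤)
    (w : ℕ → ℂ) (hw : ∀ n, w n ≠ 0)
    (T : H →L[ℂ] H) (hT : ∀ n, T (e n) = w n • e (n + 1))
    (hr : spectralRadius ℂ T ≠ 0)
    (X : H →L[ℂ] H) (hcomm : T * X = X * T) (hq : QuasiNilpotent X) :
    X = 0 := by
  have hd := Submodule.dense_iff_topologicalClosure_eq_top.mpr hdense
  have hφ := toPowerSeries_apply_of_commute he hd hw hT hcomm
  set φ := toPowerSeries w e (X (e 0))
  by_contra hX
  have hφ₀ : φ ≠ 0 := fun h => hX <| ContinuousLinearMap.ext fun y =>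
    eq_zero_of_toPowerSeries_eq_zero hd hw (by rw [hφ, h, zero_mul])
  have : Nontrivial H := ⟨⟨e 0, 0, he.ne_zero 0⟩⟩
  set n := φ.order.toNat
  set ρ := (spectralRadius ℂ T).toReal
  have hρ : 0 < ρ := ENNReal.toReal_pos hr
    ((spectrum.spectralRadius_le_nnnorm T).trans_lt ENNReal.coe_lt_top).ne
  have hbound (m : ℕ) : (‖coeff n φ‖ * ρ ^ n) ^ m ≤ ‖X ^ m‖ :=
    calc (‖coeff n φ‖ * ρ ^ n) ^ m = ‖coeff n φ‖ ^ m * ρ ^ (n * m) := by ring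
      _ ≤ ‖coeff n φ‖ ^ m * ‖T ^ (n * m)‖ := by
        gcongr; exact pow_toReal_spectralRadius_le_norm_pow T _
      _ ≤ ‖X ^ m‖ := norm_coeff_order_pow_mul_norm_shift_pow_le he hd hw hT hφ hφ₀ m
  exact mul_ne_zero (norm_ne_zero_iff.mpr (coeff_order hφ₀)) (pow_ne_zero n hρ.ne')
    (hq.eq_zero_of_pow_le_norm_pow (by positivity) hbound)
end

section
/- Let T₁₁, T₂₂ be bounded operators on Hilbert spaces H₁, H₂ with semi-simple commutants, and let T₁₂ : H₂ → H₁ be a nonzero bounded operator with dense range satisfying T₁₁T₁₂ = T₁₂T₂₂. Set T = [[T₁₁, T₁₂],[0, T₂₂]] on H₁ ⊕ H₂. If X = [[X₁₁, X₁₂],[X₂₁, X₂₂]] is a bounded operator with XT = TX, then X₂₁ = 0, i.e., X is upper triangular. -/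
open Filter Nat in
/-- **Kleinecke–Shirokov**: if the commutator `D = BC - CB` commutes with `B`,
then `D` is quasi-nilpotent. -/
theorem kleinecke_shirokov {H : Type*} [NormedAddCommGroup H] [NormedSpace ℂ H]
    (B C : H →L[ℂ] H)
    (h : B * (B * C - C * B) = (B * C - C * B) * B) :
    QuasiNilpotent (B * C - C * B) := by
  set D : H →L[ℂ] H := B * C - C * B with hDdef
  set δ : Module.End ℂ (H →L[ℂ] H) := LinearMap.mulLeft ℂ B - LinearMap.mulRight ℂ B with hδdef
  have hδ : ∀ x : H →L[ℂ] H, δ x = B * x - x * B := fun x => rfl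
  -- D commutes with B
  have hBD : B * D = D * B := h
  -- δ of a product with D on the left
  have hδD : ∀ y : H →L[ℂ] H, δ (D * y) = D * δ y := by
    intro y
    rw [hδ, hδ, mul_sub, ← mul_assoc, hBD, mul_assoc, mul_assoc]
  have L1 : ∀ (m : ℕ) (y : H →L[ℂ] H), (δ ^ m) (D * y) = D * (δ ^ m) y := by
    intro m
    induction m with
    | zero => intro y; simp
    | succ m ih =>
      intro y
      rw [pow_succ]
      simp only [Module.End.mul_apply]
      rw [hδD, ih]
  have base : ∀ y : H →L[ℂ] H, δ (C * y) = C * δ y + D * y := by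
    intro y
    rw [hδ, hδ, hDdef]
    noncomm_ring
  have L2 : ∀ (m : ℕ) (y : H →L[ℂ] H),
      (δ ^ (m + 1)) (C * y) = C * (δ ^ (m + 1)) y + (m + 1) • (D * (δ ^ m) y) := by
    intro m
    induction m with
    | zero => intro y; simpa using base y
    | succ m ih =>
      intro y
      have e1 : ∀ z : H →L[ℂ] H, (δ ^ (m + 2)) z = (δ ^ (m + 1)) (δ z) := by
        intro z; rw [pow_succ, Module.End.mul_apply]
      have e3 : ∀ z : H →L[ℂ] H, (δ ^ m) (δ z) = (δ ^ (m + 1)) z := by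
        intro z; rw [pow_succ, Module.End.mul_apply]
      calc (δ ^ (m + 2)) (C * y) = (δ ^ (m + 1)) (δ (C * y)) := e1 _
        _ = (δ ^ (m + 1)) (C * δ y) + (δ ^ (m + 1)) (D * y) := by rw [base, map_add]
        _ = C * (δ ^ (m + 1)) (δ y) + (m + 1) • (D * (δ ^ m) (δ y))
              + D * (δ ^ (m + 1)) y := by rw [ih, L1]
        _ = C * (δ ^ (m + 2)) y + (m + 1) • (D * (δ ^ (m + 1)) y)
              + D * (δ ^ (m + 1)) y := by rw [← e1, e3]
        _ = C * (δ ^ (m + 2)) y + (m + 2) • (D * (δ ^ (m + 1)) y) := by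
              conv_rhs => rw [succ_nsmul]
              rw [add_assoc]
  have L3 : ∀ n : ℕ, (δ ^ n) (C ^ n) = n ! • D ^ n ∧ (δ ^ (n + 1)) (C ^ n) = 0 := by
    intro n
    induction n with
    | zero =>
      constructor
      · simp
      · rw [zero_add, pow_one, hδ, pow_zero, mul_one, one_mul, sub_self]
    | succ n ih =>
      obtain ⟨ih1, ih2⟩ := ih
      have hz : (δ ^ (n + 2)) (C ^ n) = 0 := by
        rw [pow_succ' δ (n + 1), Module.End.mul_apply, ih2, map_zero]
      constructor
      · rw [pow_succ' C, L2, ih2, mul_zero, zero_add, ih1, mul_smul_comm,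
          ← pow_succ' D, smul_smul, ← Nat.factorial_succ]
      · rw [pow_succ' C, L2 (n + 1), hz, mul_zero, zero_add, ih2, mul_zero, smul_zero]
  -- norm estimates
  have hnδ : ∀ x : H →L[ℂ] H, ‖δ x‖ ≤ 2 * ‖B‖ * ‖x‖ := by
    intro x
    rw [hδ]
    calc ‖B * x - x * B‖ ≤ ‖B * x‖ + ‖x * B‖ := norm_sub_le _ _
      _ ≤ ‖B‖ * ‖x‖ + ‖x‖ * ‖B‖ := add_le_add (norm_mul_le _ _) (norm_mul_le _ _)
      _ = 2 * ‖B‖ * ‖x‖ := by ring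
  have hiter : ∀ (m : ℕ) (x : H →L[ℂ] H), ‖(δ ^ m) x‖ ≤ (2 * ‖B‖) ^ m * ‖x‖ := by
    intro m
    induction m with
    | zero => intro x; simp
    | succ m ih =>
      intro x
      rw [pow_succ δ, Module.End.mul_apply]
      calc ‖(δ ^ m) (δ x)‖ ≤ (2 * ‖B‖) ^ m * ‖δ x‖ := ih _
        _ ≤ (2 * ‖B‖) ^ m * (2 * ‖B‖ * ‖x‖) := by
            apply mul_le_mul_of_nonneg_left (hnδ x)
            positivity
        _ = (2 * ‖B‖) ^ (m + 1) * ‖x‖ := by ring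
  have hDn : ∀ n : ℕ, 1 ≤ n → (n ! : ℝ) * ‖D ^ n‖ ≤ (2 * ‖B‖ * ‖C‖) ^ n := by
    intro n hn
    have e1 : (n ! : ℝ) * ‖D ^ n‖ = ‖(δ ^ n) (C ^ n)‖ := by
      rw [(L3 n).1, ← Nat.cast_smul_eq_nsmul ℝ, norm_smul]
      simp
    rw [e1]
    calc ‖(δ ^ n) (C ^ n)‖ ≤ (2 * ‖B‖) ^ n * ‖C ^ n‖ := hiter n _
      _ ≤ (2 * ‖B‖) ^ n * ‖C‖ ^ n := by
          apply mul_le_mul_of_nonneg_left (norm_pow_le' C hn)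
          positivity
      _ = (2 * ‖B‖ * ‖C‖) ^ n := by ring
  -- conclude quasi-nilpotence
  unfold QuasiNilpotent
  rw [Metric.tendsto_atTop]
  intro ε hε
  set c : ℝ := 2 * ‖B‖ * ‖C‖ with hc
  have hc0 : 0 ≤ c := by positivity
  have hε2 : 0 < ε / 2 := by positivity
  have htends := FloorSemiring.tendsto_pow_div_factorial_atTop (K := ℝ) (c / (ε / 2))
  obtain ⟨N, hN⟩ := (Metric.tendsto_atTop.1 htends) 1 one_pos
  refine ⟨N + 1, fun n hn => ?_⟩
  have hn1 : 1 ≤ n := le_trans (Nat.le_add_left 1 N) hn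
  have hnN : N ≤ n := le_trans (Nat.le_add_right N 1) hn
  have hfac : (0 : ℝ) < n ! := by exact_mod_cast Nat.factorial_pos n
  have hb1 : (c / (ε / 2)) ^ n / n ! ≤ 1 := by
    have := hN n hnN
    rw [Real.dist_eq, sub_zero] at this
    calc (c / (ε / 2)) ^ n / n ! ≤ |(c / (ε / 2)) ^ n / n !| := le_abs_self _
      _ ≤ 1 := le_of_lt this
  have hbound : ‖D ^ n‖ ≤ (ε / 2) ^ n := by
    have h1 : ‖D ^ n‖ ≤ c ^ n / n ! := by
      rw [le_div_iff₀ hfac, mul_comm]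
      exact hDn n hn1
    have h2 : c ^ n / n ! = (ε / 2) ^ n * ((c / (ε / 2)) ^ n / n !) := by
      have hcc : ε / 2 * (c / (ε / 2)) = c := by
        field_simp
      rw [← mul_div_assoc, ← mul_pow, hcc]
    calc ‖D ^ n‖ ≤ c ^ n / n ! := h1
      _ = (ε / 2) ^ n * ((c / (ε / 2)) ^ n / n !) := h2
      _ ≤ (ε / 2) ^ n * 1 := by
          apply mul_le_mul_of_nonneg_left hb1
          positivity
      _ = (ε / 2) ^ n := mul_one _
  have hnne : (n : ℝ) ≠ 0 := by
    exact_mod_cast Nat.one_le_iff_ne_zero.1 hn1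
  have hfinal : ‖D ^ n‖ ^ ((n : ℝ)⁻¹) ≤ ε / 2 := by
    calc ‖D ^ n‖ ^ ((n : ℝ)⁻¹) ≤ ((ε / 2) ^ n) ^ ((n : ℝ)⁻¹) :=
          Real.rpow_le_rpow (norm_nonneg _) hbound (by positivity)
      _ = ε / 2 := by
          rw [← Real.rpow_natCast (ε / 2) n, ← Real.rpow_mul hε2.le,
            mul_inv_cancel₀ hnne, Real.rpow_one]
  rw [Real.dist_eq, sub_zero, abs_of_nonneg (Real.rpow_nonneg (norm_nonneg _) _)]
  linarith

/-- Let `T₁₁`, `T₂₂` have semi-simple commutants (i.e. no nonzero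
quasi-nilpotent operator commutes with them) and let `T₁₂ ≠ 0` have dense range with
`T₁₁ T₁₂ = T₁₂ T₂₂`. If `X = [[X₁₁,X₁₂],[X₂₁,X₂₂]]` commutes with the upper-triangular
block operator `T = [[T₁₁,T₁₂],[0,T₂₂]]`, then `X₂₁ = 0`. -/
theorem stmt6 {H₁ H₂ : Type*}
    [NormedAddCommGroup H₁] [InnerProductSpace ℂ H₁] [CompleteSpace H₁]
    [NormedAddCommGroup H₂] [InnerProductSpace ℂ H₂] [CompleteSpace H₂]
    (T11 : H₁ →L[ℂ] H₁) (T22 : H₂ →L[ℂ] H₂) (T12 : H₂ →L[ℂ] H₁)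
    (hss1 : ∀ Q : H₁ →L[ℂ] H₁, T11 * Q = Q * T11 → QuasiNilpotent Q → Q = 0)
    (hss2 : ∀ Q : H₂ →L[ℂ] H₂, T22 * Q = Q * T22 → QuasiNilpotent Q → Q = 0)
    (h12ne : T12 ≠ 0) (h12dr : DenseRange T12)
    (hflag : T11 ∘L T12 = T12 ∘L T22)
    (T : (H₁ × H₂) →L[ℂ] (H₁ × H₂))
    (hT : ∀ x y, T (x, y) = (T11 x + T12 y, T22 y))
    (X : (H₁ × H₂) →L[ℂ] (H₁ × H₂))
    (X11 : H₁ →L[ℂ] H₁) (X12 : H₂ →L[ℂ] H₁) (X21 : H₁ →L[ℂ] H₂) (X22 : H₂ →L[ℂ] H₂)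
    (hXblocks : ∀ x y, X (x, y) = (X11 x + X12 y, X21 x + X22 y))
    (hcomm : X ∘L T = T ∘L X) :
    X21 = 0 := by
  -- pointwise form of the flag condition
  have hflag' : ∀ y : H₂, T11 (T12 y) = T12 (T22 y) := by
    intro y
    have := DFunLike.congr_fun hflag y
    simpa using this
  -- intertwining: X21 T11 = T22 X21
  have key : ∀ x : H₁, X21 (T11 x) = T22 (X21 x) := by
    intro x
    have e := DFunLike.congr_fun hcomm (x, (0 : H₂))
    simp only [ContinuousLinearMap.comp_apply, hT, hXblocks, map_zero, add_zero,
      zero_add, Prod.mk.injEq] at e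
    exact e.2
  -- second-row relation applied to (0, y)
  have key2 : ∀ y : H₂, X21 (T12 y) + X22 (T22 y) = T22 (X22 y) := by
    intro y
    have e := DFunLike.congr_fun hcomm ((0 : H₁), y)
    simp only [ContinuousLinearMap.comp_apply, hT, hXblocks, map_zero, add_zero,
      zero_add, Prod.mk.injEq] at e
    exact e.2
  set D : H₂ →L[ℂ] H₂ := T22 * X22 - X22 * T22 with hDdef
  have hD : ∀ y : H₂, D y = X21 (T12 y) := by
    intro y
    have := key2 y
    simp only [hDdef, ContinuousLinearMap.sub_apply, ContinuousLinearMap.mul_apply]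
    rw [← this]
    abel
  have hcommD : T22 * D = D * T22 := by
    ext y
    simp only [ContinuousLinearMap.mul_apply]
    rw [hD, hD, ← hflag' y, key]
  have hqn : QuasiNilpotent D := kleinecke_shirokov T22 X22 hcommD
  have hD0 : D = 0 := hss2 D hcommD hqn
  have hvanish : ∀ y : H₂, X21 (T12 y) = 0 := by
    intro y
    rw [← hD y, hD0]
    rfl
  have heq : (⇑X21 : H₁ → H₂) = fun _ => 0 := by
    apply h12dr.equalizer X21.continuous continuous_const
    funext y
    simpa using hvanish y
  ext x
  have := congrFun heq x
  simpa using this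
end

section
/- Let T = [[T₁₁, T₁₂],[0, T₂₂]] where T₁₁, T₂₂ are strongly irreducible with semi-simple commutants, T₁₂ ≠ 0 has dense range, and T₁₁T₁₂ = T₁₂T₂₂. Then T is strongly irreducible if and only if T₁₂ is not in the range of the Rosenblum operator τ_{T₁₁,T₂₂}, i.e., there is no bounded X with T₁₁X − XT₂₂ = T₁₂. -/
/-- A bounded operator is strongly irreducible if the only idempotents commuting with it
are `0` and `1`. -/
def StronglyIrreducible {H : Type*} [NormedAddCommGroup H] [NormedSpace ℂ H]
    (T : H →L[ℂ] H) : Prop :=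
  ∀ P : H →L[ℂ] H, P ∘L P = P → P ∘L T = T ∘L P → P = 0 ∨ P = 1

/-! If `X` solves `T₁₁ X - X T₂₂ = T₁₂`, then `(x, y) ↦ (x + X y, 0)` is a nontrivial idempotent
commuting with `T`. Conversely, write an idempotent `P` commuting with `T` as a block matrix
`[[A, B], [C, D]]`. Its `(2,2)` entry gives `T₂₂ D - D T₂₂ = C T₁₂`, which commutes with `T₂₂` because
`T₁₂` intertwines `T₂₂` with `T₁₁`; by the Kleinecke–Shirokov theorem it is quasinilpotent, so
semisimplicity of `{T₂₂}'` kills it, and density of `ran T₁₂` gives `C = 0`. Then `A` and `D` are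
idempotents commuting with `T₁₁` and `T₂₂`, hence `0` or `1`: the mixed cases turn `±B` into a solution
of the Rosenblum equation, the other two give `P = 0` and `P = 1`. -/

open Filter
open scoped Nat Topology

section InnerDerivation

open Function

variable {R : Type*}

def innerDerivation [NonUnitalNonAssocRing R] (t : R) : R →+ R :=
  AddMonoidHom.mulLeft t - AddMonoidHom.mulRight t

@[simp]
lemma innerDerivation_apply [NonUnitalNonAssocRing R] (t x : R) :
    innerDerivation t x = t * x - x * t :=
  rfl

variable [Ring R] (t : R)

lemma innerDerivation_mul (x y : R) :
    innerDerivation t (x * y) = innerDerivation t x * y + x * innerDerivation t y := by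
  simp only [innerDerivation_apply]
  noncomm_ring

lemma innerDerivation_eq_zero_iff {c : R} : innerDerivation t c = 0 ↔ Commute t c :=
  sub_eq_zero

lemma innerDerivation_iterate_mul_of_commute {c : R} (hc : Commute t c) (n : ℕ) (x : R) :
    (innerDerivation t)^[n] (c * x) = c * (innerDerivation t)^[n] x := by
  induction n with
  | zero => rfl
  | succ n ih =>
    rw [iterate_succ_apply', iterate_succ_apply', ih, innerDerivation_mul,
      (innerDerivation_eq_zero_iff t).2 hc, zero_mul, zero_add]

lemma innerDerivation_iterate_succ_mul {a : R} (ha : Commute t (innerDerivation t a)) (n : ℕ)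
    (x : R) :
    (innerDerivation t)^[n + 1] (a * x) =
      a * (innerDerivation t)^[n + 1] x +
        (n + 1) • (innerDerivation t a * (innerDerivation t)^[n] x) := by
  induction n generalizing x with
  | zero =>
    simp only [zero_add, one_smul, iterate_one, iterate_zero_apply, innerDerivation_mul]
    abel
  | succ n ih =>
    rw [iterate_succ_apply, innerDerivation_mul, iterate_map_add, ih,
      innerDerivation_iterate_mul_of_commute t ha, ← iterate_succ_apply, ← iterate_succ_apply,
      succ_nsmul _ (n + 1)]
    abel

lemma innerDerivation_iterate_pow {a : R} (ha : Commute t (innerDerivation t a)) (n : ℕ) :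
    (innerDerivation t)^[n] (a ^ n) = n ! • innerDerivation t a ^ n := by
  induction n with
  | zero => simp
  | succ n ih =>
    have hvanish : (innerDerivation t)^[n + 1] (a ^ n) = 0 := by
      rw [iterate_succ_apply', ih, map_nsmul, (innerDerivation_eq_zero_iff t).2 (ha.pow_right n),
        smul_zero]
    rw [pow_succ' a, innerDerivation_iterate_succ_mul t ha, hvanish, mul_zero, zero_add, ih,
      mul_smul_comm, smul_smul, ← pow_succ', Nat.factorial_succ]

end InnerDerivation

lemma tendsto_rpow_inv_of_le_pow_div_factorial {u : ℕ → ℝ} (M : ℝ) (hu₀ : ∀ n, 0 ≤ u n)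
    (hu : ∀ n, 0 < n → u n ≤ M ^ n / n !) :
    Tendsto (fun n : ℕ => u n ^ (n : ℝ)⁻¹) atTop (𝓝 0) := by
  refine tendsto_order.2
    ⟨fun b hb => .of_forall fun n => hb.trans_le (Real.rpow_nonneg (hu₀ n) _), fun ε hε => ?_⟩
  filter_upwards [(FloorSemiring.tendsto_pow_div_factorial_atTop (M / ε)).eventually_lt_const
    one_pos, eventually_gt_atTop 0] with n hsmall hn
  have hlt : u n < ε ^ n :=
    calc u n ≤ M ^ n / n ! := hu n hn
      _ = ε ^ n * ((M / ε) ^ n / n !) := by rw [div_pow]; field_simp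
      _ < ε ^ n * 1 := by gcongr
      _ = ε ^ n := mul_one _
  calc u n ^ (n : ℝ)⁻¹ < (ε ^ n) ^ (n : ℝ)⁻¹ :=
        Real.rpow_lt_rpow (hu₀ n) hlt (by positivity)
    _ = ε := Real.pow_rpow_inv_natCast hε.le hn.ne'

section Norm

open Function

variable {R : Type*} [NormedRing R]

lemma norm_innerDerivation_iterate_le (t x : R) (n : ℕ) :
    ‖(innerDerivation t)^[n] x‖ ≤ (2 * ‖t‖) ^ n * ‖x‖ := by
  induction n generalizing x with
  | zero => simp
  | succ n ih =>
    calc ‖(innerDerivation t)^[n] (t * x - x * t)‖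
        ≤ (2 * ‖t‖) ^ n * ‖t * x - x * t‖ := ih _
      _ ≤ (2 * ‖t‖) ^ n * (‖t‖ * ‖x‖ + ‖x‖ * ‖t‖) := by
          gcongr
          exact (norm_sub_le _ _).trans (add_le_add (norm_mul_le _ _) (norm_mul_le _ _))
      _ = (2 * ‖t‖) ^ (n + 1) * ‖x‖ := by ring

-- `n = 0` is excluded because `‖1‖` may exceed `1`.
lemma norm_innerDerivation_pow_le [NormedSpace ℝ R] {t a : R}
    (ha : Commute t (innerDerivation t a)) {n : ℕ} (hn : 0 < n) :
    ‖innerDerivation t a ^ n‖ ≤ (2 * ‖t‖ * ‖a‖) ^ n / n ! := by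
  rw [le_div_iff₀ (mod_cast n.factorial_pos), mul_comm, ← nsmul_eq_mul, ← RCLike.norm_nsmul ℝ,
    ← innerDerivation_iterate_pow t ha, mul_pow]
  calc ‖(innerDerivation t)^[n] (a ^ n)‖ ≤ (2 * ‖t‖) ^ n * ‖a ^ n‖ :=
        norm_innerDerivation_iterate_le t _ n
    _ ≤ (2 * ‖t‖) ^ n * ‖a‖ ^ n := by gcongr; exact norm_pow_le' a hn

/-- Kleinecke–Shirokov theorem. -/
theorem tendsto_norm_innerDerivation_pow_rpow_inv [NormedSpace ℝ R] {t a : R}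
    (ha : Commute t (innerDerivation t a)) :
    Tendsto (fun n : ℕ => ‖innerDerivation t a ^ n‖ ^ (n : ℝ)⁻¹) atTop (𝓝 0) :=
  tendsto_rpow_inv_of_le_pow_div_factorial _ (fun _ => norm_nonneg _)
    fun _ => norm_innerDerivation_pow_le ha

end Norm

namespace ContinuousLinearMap

section Blocks

variable {R E F : Type*} [Semiring R] [TopologicalSpace E] [AddCommMonoid E] [Module R E]
  [TopologicalSpace F] [AddCommMonoid F] [Module R F]

theorem exists_blocks (P : E × F →L[R] E × F) :
    ∃ (A : E →L[R] E) (B : F →L[R] E) (C : E →L[R] F) (D : F →L[R] F),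
      ∀ x y, P (x, y) = (A x + B y, C x + D y) := by
  refine ⟨fst R E F ∘L P ∘L inl R E F, fst R E F ∘L P ∘L inr R E F,
    snd R E F ∘L P ∘L inl R E F, snd R E F ∘L P ∘L inr R E F, fun x y => ?_⟩
  rw [← Prod.fst_add_snd (x, y), map_add]
  rfl

variable [ContinuousAdd E] [ContinuousAdd F]
  {T₁₁ A : E →L[R] E} {T₁₂ B : F →L[R] E} {C : E →L[R] F} {T₂₂ D : F →L[R] F}
  {T P : E × F →L[R] E × F}

theorem commute_upperTriangular_blocks (hT : ∀ x y, T (x, y) = (T₁₁ x + T₁₂ y, T₂₂ y))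
    (hP : ∀ x y, P (x, y) = (A x + B y, C x + D y)) (hPT : P ∘L T = T ∘L P) :
    A ∘L T₁₁ = T₁₁ ∘L A + T₁₂ ∘L C ∧ C ∘L T₁₁ = T₂₂ ∘L C ∧
      A ∘L T₁₂ + B ∘L T₂₂ = T₁₁ ∘L B + T₁₂ ∘L D ∧ C ∘L T₁₂ + D ∘L T₂₂ = T₂₂ ∘L D := by
  have h₁ (x : E) : A (T₁₁ x) = T₁₁ (A x) + T₁₂ (C x) ∧ C (T₁₁ x) = T₂₂ (C x) := by
    simpa [hT, hP] using DFunLike.congr_fun hPT (x, 0)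
  have h₂ (y : F) : A (T₁₂ y) + B (T₂₂ y) = T₁₁ (B y) + T₁₂ (D y) ∧
      C (T₁₂ y) + D (T₂₂ y) = T₂₂ (D y) := by
    simpa [hT, hP] using DFunLike.congr_fun hPT (0, y)
  exact ⟨ext fun x => (h₁ x).1, ext fun x => (h₁ x).2, ext fun y => (h₂ y).1,
    ext fun y => (h₂ y).2⟩

theorem idempotent_blocks (hP : ∀ x y, P (x, y) = (A x + B y, C x + D y)) (hPP : P ∘L P = P) :
    A ∘L A + B ∘L C = A ∧ A ∘L B + B ∘L D = B ∧ C ∘L B + D ∘L D = D := by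
  have h₁ (x : E) : A (A x) + B (C x) = A x := by
    simpa [hP] using congr_arg Prod.fst (DFunLike.congr_fun hPP (x, 0))
  have h₂ (y : F) : A (B y) + B (D y) = B y ∧ C (B y) + D (D y) = D y := by
    simpa [hP] using DFunLike.congr_fun hPP (0, y)
  exact ⟨ext h₁, ext fun y => (h₂ y).1, ext fun y => (h₂ y).2⟩

end Blocks

end ContinuousLinearMap

section UpperTriangular

open ContinuousLinearMap

variable {H₁ H₂ : Type*} [NormedAddCommGroup H₁] [NormedSpace ℂ H₁]
  [NormedAddCommGroup H₂] [NormedSpace ℂ H₂]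
  {T11 : H₁ →L[ℂ] H₁} {T22 : H₂ →L[ℂ] H₂} {T12 : H₂ →L[ℂ] H₁} {T : H₁ × H₂ →L[ℂ] H₁ × H₂}

theorem lower_left_block_eq_zero (hT : ∀ x y, T (x, y) = (T11 x + T12 y, T22 y))
    (hss2 : ∀ Q : H₂ →L[ℂ] H₂, T22 * Q = Q * T22 → QuasiNilpotent Q → Q = 0)
    (h12dr : DenseRange T12) (hflag : T11 ∘L T12 = T12 ∘L T22)
    {P : H₁ × H₂ →L[ℂ] H₁ × H₂} {A : H₁ →L[ℂ] H₁} {B : H₂ →L[ℂ] H₁} {C : H₁ →L[ℂ] H₂}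
    {D : H₂ →L[ℂ] H₂} (hP : ∀ x y, P (x, y) = (A x + B y, C x + D y))
    (hPT : P ∘L T = T ∘L P) : C = 0 := by
  obtain ⟨-, hCT11, -, hCT12⟩ := commute_upperTriangular_blocks hT hP hPT
  have hD : innerDerivation T22 D = C ∘L T12 := (eq_sub_of_add_eq hCT12).symm
  have hcomm : Commute T22 (innerDerivation T22 D) := by
    rw [hD]
    change T22 ∘L C ∘L T12 = (C ∘L T12) ∘L T22
    rw [← comp_assoc, ← hCT11, comp_assoc, hflag, comp_assoc]
  have hCT12_zero : C ∘L T12 = 0 :=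
    hD ▸ hss2 _ hcomm (tendsto_norm_innerDerivation_pow_rpow_inv hcomm)
  exact DFunLike.coe_injective <|
    h12dr.equalizer C.continuous continuous_zero (congr_arg DFunLike.coe hCT12_zero)

theorem not_stronglyIrreducible_of_rosenblum_eq (hT : ∀ x y, T (x, y) = (T11 x + T12 y, T22 y))
    (h12ne : T12 ≠ 0) {X : H₂ →L[ℂ] H₁} (hX : T11 ∘L X - X ∘L T22 = T12) :
    ¬ StronglyIrreducible T := by
  obtain ⟨y₀, hy₀⟩ : ∃ y, T12 y ≠ 0 := by
    by_contra! h
    exact h12ne (ext h)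
  have hXy (y : H₂) : T11 (X y) = T12 y + X (T22 y) := by
    rw [← hX]
    simp
  let P : H₁ × H₂ →L[ℂ] H₁ × H₂ := inl ℂ H₁ H₂ ∘L (fst ℂ H₁ H₂ + X ∘L snd ℂ H₁ H₂)
  have hP (x : H₁) (y : H₂) : P (x, y) = (x + X y, 0) := rfl
  have hPP : P ∘L P = P := ext fun ⟨x, y⟩ => by simp [hP]
  have hPT : P ∘L T = T ∘L P := ext fun ⟨x, y⟩ => by simp [hP, hT, hXy, add_assoc]
  intro hSI
  rcases hSI P hPP hPT with h | h
  · exact hy₀ (by simpa [hP] using DFunLike.congr_fun h (T12 y₀, 0))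
  · obtain ⟨-, hy⟩ : X y₀ = 0 ∧ 0 = y₀ := by simpa [hP] using DFunLike.congr_fun h (0, y₀)
    exact hy₀ (by rw [← hy, map_zero])

theorem stronglyIrreducible_of_not_exists_rosenblum_eq
    (hT : ∀ x y, T (x, y) = (T11 x + T12 y, T22 y))
    (hSI1 : StronglyIrreducible T11) (hSI2 : StronglyIrreducible T22)
    (hss2 : ∀ Q : H₂ →L[ℂ] H₂, T22 * Q = Q * T22 → QuasiNilpotent Q → Q = 0)
    (h12dr : DenseRange T12) (hflag : T11 ∘L T12 = T12 ∘L T22)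
    (hnoX : ¬ ∃ X : H₂ →L[ℂ] H₁, T11 ∘L X - X ∘L T22 = T12) :
    StronglyIrreducible T := by
  intro P hPP hPT
  obtain ⟨A, B, C, D, hP⟩ := P.exists_blocks
  obtain rfl := lower_left_block_eq_zero hT hss2 h12dr hflag hP hPT
  obtain ⟨hAT, -, hBT, hDT⟩ := commute_upperTriangular_blocks hT hP hPT
  obtain ⟨hAA, hB, hDD⟩ := idempotent_blocks hP hPP
  simp only [comp_zero, zero_comp, add_zero, zero_add] at hAT hDT hAA hDD
  rcases hSI1 A hAA hAT with rfl | rfl <;> rcases hSI2 D hDD hDT with rfl | rfl <;>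
    simp only [one_def, zero_comp, comp_zero, id_comp, comp_id, add_zero, zero_add] at hB hBT
  · subst hB
    exact .inl (ext fun ⟨x, y⟩ => by simp [hP])
  · exact (hnoX ⟨-B, by simp [hBT]⟩).elim
  · exact (hnoX ⟨B, by simp [sub_eq_iff_eq_add, hBT]⟩).elim
  · obtain rfl : B = 0 := by simpa using hB
    exact .inr (ext fun ⟨x, y⟩ => by simp [hP])

end UpperTriangular

theorem stmt7_general {H₁ H₂ : Type*}
    [NormedAddCommGroup H₁] [InnerProductSpace ℂ H₁]
    [NormedAddCommGroup H₂] [InnerProductSpace ℂ H₂]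
    (T11 : H₁ →L[ℂ] H₁) (T22 : H₂ →L[ℂ] H₂) (T12 : H₂ →L[ℂ] H₁)
    (hSI1 : StronglyIrreducible T11) (hSI2 : StronglyIrreducible T22)
    (hss2 : ∀ Q : H₂ →L[ℂ] H₂, T22 * Q = Q * T22 → QuasiNilpotent Q → Q = 0)
    (h12ne : T12 ≠ 0) (h12dr : DenseRange T12)
    (hflag : T11 ∘L T12 = T12 ∘L T22)
    (T : (H₁ × H₂) →L[ℂ] (H₁ × H₂))
    (hT : ∀ x y, T (x, y) = (T11 x + T12 y, T22 y)) :
    StronglyIrreducible T ↔ ¬ ∃ X : H₂ →L[ℂ] H₁, T11 ∘L X - X ∘L T22 = T12 :=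
  ⟨fun hSI ⟨_, hX⟩ => not_stronglyIrreducible_of_rosenblum_eq hT h12ne hX hSI,
    stronglyIrreducible_of_not_exists_rosenblum_eq hT hSI1 hSI2 hss2 h12dr hflag⟩

/-- Let `T = [[T₁₁,T₁₂],[0,T₂₂]]` where `T₁₁`, `T₂₂` are strongly
irreducible with semi-simple commutants, `T₁₂ ≠ 0` has dense range, and
`T₁₁ T₁₂ = T₁₂ T₂₂`. Then `T` is strongly irreducible iff `T₁₂ ∉ ran τ_{T₁₁,T₂₂}`. -/
theorem stmt7 {H₁ H₂ : Type*}
    [NormedAddCommGroup H₁] [InnerProductSpace ℂ H₁] [CompleteSpace H₁]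
    [NormedAddCommGroup H₂] [InnerProductSpace ℂ H₂] [CompleteSpace H₂]
    (T11 : H₁ →L[ℂ] H₁) (T22 : H₂ →L[ℂ] H₂) (T12 : H₂ →L[ℂ] H₁)
    (hSI1 : StronglyIrreducible T11) (hSI2 : StronglyIrreducible T22)
    (hss1 : ∀ Q : H₁ →L[ℂ] H₁, T11 * Q = Q * T11 → QuasiNilpotent Q → Q = 0)
    (hss2 : ∀ Q : H₂ →L[ℂ] H₂, T22 * Q = Q * T22 → QuasiNilpotent Q → Q = 0)
    (h12ne : T12 ≠ 0) (h12dr : DenseRange T12)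
    (hflag : T11 ∘L T12 = T12 ∘L T22)
    (T : (H₁ × H₂) →L[ℂ] (H₁ × H₂))
    (hT : ∀ x y, T (x, y) = (T11 x + T12 y, T22 y)) :
    StronglyIrreducible T ↔ ¬ ∃ X : H₂ →L[ℂ] H₁, T11 ∘L X - X ∘L T22 = T12 :=
  stmt7_general T11 T22 T12 hSI1 hSI2 hss2 h12ne h12dr hflag T hT
end

section
/- Let S* be the backward unilateral shift on ℓ²(ℕ) (S*e₀ = 0, S*e_{n+1} = e_n). There is no bounded operator Z with (I + S*)Z − Z(I + S*) = I + S*; equivalently, I + S* ∉ ran τ_{I+S*}. -/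
open scoped InnerProductSpace

/-- Let `S*` be the backward unilateral shift on `ℓ²(ℕ)` (`S* e₀ = 0`,
`S* e_{n+1} = e n`). There is no bounded operator `Z` with
`(I + S*) Z − Z (I + S*) = I + S*`, i.e. `I + S* ∉ ran τ_{I+S*}`. -/
theorem stmt9 {H : Type*} [NormedAddCommGroup H] [InnerProductSpace ℂ H] [CompleteSpace H]
    (e : ℕ → H) (he : Orthonormal ℂ e)
    (hdense : (Submodule.span ℂ (Set.range e)).topologicalClosure = ⊤)
    (S' : H →L[ℂ] H) (h0 : S' (e 0) = 0) (hs : ∀ n, S' (e (n + 1)) = e n) :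
    ¬ ∃ Z : H →L[ℂ] H, (1 + S') * Z - Z * (1 + S') = 1 + S' := by
  rintro ⟨Z, hZ⟩
  have hie : ∀ i j, ⟪e i, e j⟫_ℂ = if i = j then 1 else 0 := orthonormal_iff_ite.mp he
  have hcomm : ∀ x, S' (Z x) - Z (S' x) = x + S' x := by
    intro x
    have := congrArg (fun A : H →L[ℂ] H => A x) hZ
    simpa [ContinuousLinearMap.sub_apply, ContinuousLinearMap.add_apply,
      ContinuousLinearMap.mul_apply, sub_eq_iff_eq_add, add_comm, add_left_comm,
      add_assoc] using this
  -- adjoint of S' is the forward shift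
  set A := ContinuousLinearMap.adjoint S' with hA
  have hadj : ∀ k, A (e k) = e (k + 1) := by
    intro k
    have hbot : (Submodule.span ℂ (Set.range e))ᗮ = ⊥ :=
      Submodule.topologicalClosure_eq_top_iff.mp hdense
    have hmem : A (e k) - e (k + 1) ∈ (Submodule.span ℂ (Set.range e))ᗮ := by
      rw [Submodule.mem_orthogonal']
      intro u hu
      have key : ∀ m, ⟪A (e k) - e (k + 1), e m⟫_ℂ = 0 := by
        intro m
        rw [inner_sub_left, ContinuousLinearMap.adjoint_inner_left]
        cases m with
        | zero => simp [h0, hie, inner_zero_right]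
        | succ j => simp [hs, hie]
      refine Submodule.span_induction (p := fun u _ => ⟪A (e k) - e (k + 1), u⟫_ℂ = 0)
        ?_ ?_ ?_ ?_ hu
      · rintro _ ⟨m, rfl⟩; exact key m
      · simp
      · intro x y _ _ hx hy; rw [inner_add_right, hx, hy, add_zero]
      · intro c x _ hx; rw [inner_smul_right, hx, mul_zero]
    rw [hbot, Submodule.mem_bot, sub_eq_zero] at hmem
    exact hmem
  have hshift : ∀ k (x : H), ⟪e (k + 1), x⟫_ℂ = ⟪e k, S' x⟫_ℂ := by
    intro k x
    rw [← hadj k, ContinuousLinearMap.adjoint_inner_left]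
  -- the coefficients c n = ⟪e (n+1), Z (e n)⟫ satisfy c 0 = 1, c (n+1) = c n + 1
  have hc : ∀ n, ⟪e (n + 1), Z (e n)⟫_ℂ = (n : ℂ) + 1 := by
    intro n
    induction n with
    | zero =>
      have h := hcomm (e 0)
      rw [h0, map_zero, sub_zero, add_zero] at h
      rw [hshift 0, h, hie]
      simp
    | succ n ih =>
      have h := hcomm (e (n + 1))
      rw [hs n, sub_eq_iff_eq_add] at h
      rw [hshift (n + 1), h]
      rw [inner_add_right, inner_add_right, ih, hie, hie]
      push_cast
      simp
      ring
  obtain ⟨n, hn⟩ := exists_nat_gt ‖Z‖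
  have h1 : (n : ℝ) + 1 ≤ ‖Z (e n)‖ := by
    have := norm_inner_le_norm (𝕜 := ℂ) (e (n + 1)) (Z (e n))
    rw [hc n, he.1 (n + 1), one_mul] at this
    calc (n : ℝ) + 1 = ‖(n : ℂ) + 1‖ := by
          rw [show ((n : ℂ) + 1) = ((n + 1 : ℕ) : ℂ) by push_cast; ring,
            Complex.norm_natCast]
          push_cast; ring
      _ ≤ ‖Z (e n)‖ := this
  have h2 : ‖Z (e n)‖ ≤ ‖Z‖ := by
    calc ‖Z (e n)‖ ≤ ‖Z‖ * ‖e n‖ := Z.le_opNorm _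
      _ = ‖Z‖ := by rw [he.1 n, mul_one]
  linarith
end

section
/- Let S be the unilateral shift on H, and let T = [[I+S*, I],[0, I+S*]] and T̃ = [[I+S*, I+S*],[0, I+S*]] on H ⊕ H. Then with X = [[I, 0],[0, I+S*]] and Y = [[(I+S*)², 0],[0, I+S*]], one has TX = XT̃ and YT = T̃Y, and X, Y are injective with dense range; hence T and T̃ are quasi-similar. -/
/-- With `A = I + S*` (`S` the unilateral shift on `ℓ²(ℕ)`), the block
operators `T = [[A,I],[0,A]]` and `T̃ = [[A,A],[0,A]]` on `H ⊕ H` satisfy `T X = X T̃` and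
`Y T = T̃ Y` for `X = [[I,0],[0,A]]`, `Y = [[A²,0],[0,A]]`, and `X`, `Y` are injective with
dense range; hence `T` and `T̃` are quasi-similar. -/
theorem stmt10 {H : Type*} [NormedAddCommGroup H] [InnerProductSpace ℂ H] [CompleteSpace H]
    (e : ℕ → H) (he : Orthonormal ℂ e)
    (hdense : (Submodule.span ℂ (Set.range e)).topologicalClosure = ⊤)
    (S : H →L[ℂ] H) (hS : ∀ n, S (e n) = e (n + 1))
    (A : H →L[ℂ] H) (hA : A = 1 + ContinuousLinearMap.adjoint S)
    (T Tt X Y : (H × H) →L[ℂ] (H × H))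
    (hT : ∀ x y, T (x, y) = (A x + y, A y))
    (hTt : ∀ x y, Tt (x, y) = (A x + A y, A y))
    (hX : ∀ x y, X (x, y) = (x, A y))
    (hY : ∀ x y, Y (x, y) = (A (A x), A y)) :
    T ∘L X = X ∘L Tt ∧ Y ∘L T = Tt ∘L Y ∧
      Function.Injective X ∧ DenseRange X ∧ Function.Injective Y ∧ DenseRange Y := by
  have hee := orthonormal_iff_ite.mp he
  -- a vector orthogonal to all `e n` is `0`
  have horth : ∀ x : H, (∀ n, inner ℂ (e n) x = (0 : ℂ)) → x = 0 := by
    intro x hx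
    have hbot := (Submodule.topologicalClosure_eq_top_iff).mp hdense
    have hxmem : x ∈ (Submodule.span ℂ (Set.range e))ᗮ := by
      rw [Submodule.mem_orthogonal]
      intro u hu
      induction hu using Submodule.span_induction with
      | mem u hu => obtain ⟨n, rfl⟩ := hu; exact hx n
      | zero => simp
      | add u v _ _ hu hv => simp [inner_add_left, hu, hv]
      | smul c u _ hu => simp [inner_smul_left, hu]
    rw [hbot] at hxmem
    simpa using hxmem
  -- action of the adjoint on the basis
  have hS0 : ContinuousLinearMap.adjoint S (e 0) = 0 := by
    apply horth
    intro n
    rw [ContinuousLinearMap.adjoint_inner_right, hS, hee]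
    simp
  have hSn : ∀ n, ContinuousLinearMap.adjoint S (e (n + 1)) = e n := by
    intro n
    have h : ContinuousLinearMap.adjoint S (e (n + 1)) - e n = 0 := by
      apply horth
      intro m
      rw [inner_sub_right, ContinuousLinearMap.adjoint_inner_right, hS, hee, hee]
      simp
    exact sub_eq_zero.mp h
  -- `A` is injective
  have hkerA : ∀ x : H, A x = 0 → x = 0 := by
    intro x hx
    have hrec : ∀ n, inner ℂ (e (n + 1)) x = -(inner ℂ (e n) x : ℂ) := by
      intro n
      have h1 : ContinuousLinearMap.adjoint S x = -x := by
        have h := hx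
        rw [hA] at h
        simp only [ContinuousLinearMap.add_apply, ContinuousLinearMap.one_apply] at h
        rw [add_comm] at h
        exact eq_neg_of_add_eq_zero_left h
      have h2 : (inner ℂ (e n) (ContinuousLinearMap.adjoint S x) : ℂ) = inner ℂ (e (n + 1)) x := by
        rw [ContinuousLinearMap.adjoint_inner_right, hS]
      rw [h1, inner_neg_right] at h2
      linear_combination -h2
    have hconst : ∀ n, ‖(inner ℂ (e n) x : ℂ)‖ = ‖(inner ℂ (e 0) x : ℂ)‖ := by
      intro n
      induction n with
      | zero => rfl
      | succ k ih => rw [hrec k, norm_neg, ih]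
    -- Bessel: the inner products are square-summable, hence tend to 0
    have hsum := he.inner_products_summable (x := x)
    have htend := hsum.tendsto_atTop_zero
    have htend' : Filter.Tendsto (fun _ : ℕ => ‖(inner ℂ (e 0) x : ℂ)‖ ^ 2)
        Filter.atTop (nhds 0) := by
      refine htend.congr ?_
      intro n
      rw [hconst n]
    have h0 : ‖(inner ℂ (e 0) x : ℂ)‖ ^ 2 = 0 :=
      tendsto_nhds_unique tendsto_const_nhds htend'
    have h0' : (inner ℂ (e 0) x : ℂ) = 0 := by
      have := pow_eq_zero_iff (n := 2) (by norm_num) |>.mp h0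
      exact norm_eq_zero.mp this
    apply horth
    intro n
    have := hconst n
    rw [h0', norm_zero] at this
    exact norm_eq_zero.mp this
  have hinjA : Function.Injective A := by
    intro a b hab
    have : A (a - b) = 0 := by rw [map_sub, hab, sub_self]
    have := hkerA _ this
    exact sub_eq_zero.mp this
  -- `1 + S` (the adjoint of `A`) is injective
  have hkerAS : ∀ y : H, y + S y = 0 → y = 0 := by
    intro y hy
    have hSy : S y = -y := by
      have := hy
      rw [add_comm] at this
      exact add_eq_zero_iff_eq_neg.mp this
    have hz : ∀ n, inner ℂ (e n) y = (0 : ℂ) := by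
      intro n
      induction n with
      | zero =>
        have : (inner ℂ (ContinuousLinearMap.adjoint S (e 0)) y : ℂ) = inner ℂ (e 0) (S y) :=
          ContinuousLinearMap.adjoint_inner_left S y (e 0)
        rw [hS0, inner_zero_left, hSy, inner_neg_right] at this
        have := this.symm
        simpa [neg_eq_zero] using this
      | succ k ih =>
        have : (inner ℂ (ContinuousLinearMap.adjoint S (e (k + 1))) y : ℂ)
            = inner ℂ (e (k + 1)) (S y) :=
          ContinuousLinearMap.adjoint_inner_left S y (e (k + 1))
        rw [hSn, ih, hSy, inner_neg_right] at this
        have := this.symm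
        simpa [neg_eq_zero] using this
    exact horth y hz
  -- `A` has dense range
  have hdenseA : DenseRange A := by
    have hadjA : ContinuousLinearMap.adjoint A = 1 + S := by
      rw [hA, map_add]
      congr 1
      · exact ContinuousLinearMap.adjoint_id
      · exact ContinuousLinearMap.adjoint_adjoint S
    have horthA : (LinearMap.range (A : H →ₗ[ℂ] H) : Submodule ℂ H)ᗮ = ⊥ := by
      rw [Submodule.eq_bot_iff]
      intro y hy
      rw [Submodule.mem_orthogonal] at hy
      have hy' : ∀ x : H, (inner ℂ x (ContinuousLinearMap.adjoint A y) : ℂ) = 0 := by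
        intro x
        rw [ContinuousLinearMap.adjoint_inner_right]
        exact hy (A x) (LinearMap.mem_range_self _ x)
      have : ContinuousLinearMap.adjoint A y = 0 := by
        have := hy' (ContinuousLinearMap.adjoint A y)
        exact inner_self_eq_zero.mp this
      rw [hadjA] at this
      simp only [ContinuousLinearMap.add_apply, ContinuousLinearMap.one_apply] at this
      exact hkerAS y this
    have htop : (LinearMap.range (A : H →ₗ[ℂ] H) : Submodule ℂ H).topologicalClosure = ⊤ :=
      Submodule.topologicalClosure_eq_top_iff.mpr horthA
    have : Dense ((LinearMap.range (A : H →ₗ[ℂ] H) : Submodule ℂ H) : Set H) :=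
      Submodule.dense_iff_topologicalClosure_eq_top.mpr htop
    simpa [LinearMap.coe_range, DenseRange] using this
  -- functional descriptions of X and Y
  have hXfun : ⇑X = Prod.map id A := by
    funext p
    obtain ⟨a, b⟩ := p
    simp [hX]
  have hYfun : ⇑Y = Prod.map (A ∘ A) A := by
    funext p
    obtain ⟨a, b⟩ := p
    simp [hY]
  refine ⟨?_, ?_, ?_, ?_, ?_, ?_⟩
  · apply ContinuousLinearMap.ext
    rintro ⟨a, b⟩
    simp [ContinuousLinearMap.comp_apply, hX, hT, hTt, map_add]
  · apply ContinuousLinearMap.ext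
    rintro ⟨a, b⟩
    simp [ContinuousLinearMap.comp_apply, hY, hT, hTt, map_add]
  · rw [hXfun]
    exact Function.Injective.prodMap Function.injective_id hinjA
  · rw [hXfun]
    exact DenseRange.prodMap denseRange_id hdenseA
  · rw [hYfun]
    exact Function.Injective.prodMap (hinjA.comp hinjA) hinjA
  · rw [hYfun]
    exact DenseRange.prodMap (hdenseA.comp hdenseA A.continuous) hdenseA
end

section
/- Let A and B be injective unilateral (forward) weighted shifts on H with positive nonzero weight sequences. If A and B are quasi-similar, then A and B are similar. -/
/-!
Write `α n = a 0 ⋯ a (n-1)` and `β n = b 0 ⋯ b (n-1)`. If `A X = X B` with `X` of dense range,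
the diagonal entries `x n = ⟪e n, X (e n)⟫` satisfy `b n * x (n+1) = a n * x n`, hence
`β n * x n = α n * x 0`. Moreover `x 0 ≠ 0`: the vector `e 0` is orthogonal to the range of `A`,
which forces `⟪e 0, X (e (n+1))⟫ = 0`, so `x 0 = 0` would make `e 0` orthogonal to the dense range
of `X`. As `‖x n‖ ≤ ‖X‖`, the ratios `α n / β n` are bounded, and the intertwiner `Y` bounds
`β n / α n` in the same way. The diagonal operator `e n ↦ (β n / α n) • e n` is then invertible
and intertwines `A` with `B` (Shields' criterion).
-/

open scoped InnerProductSpace ENNReal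
open Finset

namespace lp

variable {ι 𝕜 : Type*} [RCLike 𝕜] {E : ι → Type*} [∀ i, NormedAddCommGroup (E i)]
  [∀ i, NormedSpace 𝕜 (E i)] {p : ℝ≥0∞}

theorem memℓp_infty_smul (r : lp (fun _ : ι => 𝕜) ∞) (f : lp E p) :
    Memℓp (fun i => r i • f i) p :=
  ((lp.memℓp f).norm.const_mul ‖r‖).mono fun i => by
    rw [norm_smul]
    exact mul_le_mul_of_nonneg_right (norm_apply_le_norm ENNReal.top_ne_zero r i) (norm_nonneg _)

variable [Fact (1 ≤ p)]

variable (E p) in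
noncomputable def diagonal (r : lp (fun _ : ι => 𝕜) ∞) : lp E p →L[𝕜] lp E p :=
  LinearMap.mkContinuous
    { toFun := fun f => ⟨fun i => r i • f i, memℓp_infty_smul r f⟩
      map_add' := fun f g => by ext i; simp [smul_add]; rfl
      map_smul' := fun c f => by ext i; simp [smul_comm (r i) c] }
    ‖r‖ fun f => by
      have hp : p ≠ 0 := (zero_lt_one.trans_le Fact.out).ne'
      calc _ ≤ ‖(‖r‖ : 𝕜) • f‖ := norm_mono hp fun i => by
              simp only [LinearMap.coe_mk, AddHom.coe_mk, coeFn_smul, Pi.smul_apply, norm_smul]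
              rw [RCLike.norm_ofReal, abs_norm]
              gcongr
              exact norm_apply_le_norm ENNReal.top_ne_zero r i
        _ = ‖r‖ * ‖f‖ := by rw [norm_const_smul hp]; simp

@[simp]
theorem diagonal_apply (r : lp (fun _ : ι => 𝕜) ∞) (f : lp E p) (i : ι) :
    diagonal E p r f i = r i • f i :=
  rfl

theorem diagonal_mul (r s : lp (fun _ : ι => 𝕜) ∞) :
    diagonal E p (r * s) = diagonal E p r ∘L diagonal E p s := by
  ext f i
  simp [infty_coeFn_mul, mul_smul]

theorem diagonal_one : diagonal E p (1 : lp (fun _ : ι => 𝕜) ∞) = ContinuousLinearMap.id 𝕜 _ := by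
  ext f i
  simp [infty_coeFn_one]

variable (E p) in
noncomputable def diagonalEquiv (u : (lp (fun _ : ι => 𝕜) ∞)ˣ) : lp E p ≃L[𝕜] lp E p :=
  ContinuousLinearEquiv.equivOfInverse (diagonal E p u) (diagonal E p ↑u⁻¹)
    (fun f => by rw [← ContinuousLinearMap.comp_apply, ← diagonal_mul, u.inv_mul, diagonal_one]; rfl)
    (fun f => by rw [← ContinuousLinearMap.comp_apply, ← diagonal_mul, u.mul_inv, diagonal_one]; rfl)

theorem diagonal_single [DecidableEq ι] (r : lp (fun _ : ι => 𝕜) ∞) (i : ι) (x : E i) :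
    diagonal E p r (lp.single p i x) = lp.single p i (r i • x) := by
  ext j
  rcases eq_or_ne j i with rfl | h
  · simp
  · simp [Pi.single_eq_of_ne h]

end lp

namespace HilbertBasis

variable {ι 𝕜 H : Type*} [RCLike 𝕜] [NormedAddCommGroup H] [InnerProductSpace 𝕜 H]
  (v : HilbertBasis ι 𝕜 H)

theorem continuousLinearMap_ext {F : Type*} [TopologicalSpace F] [AddCommMonoid F] [Module 𝕜 F]
    [T2Space F] {f g : H →L[𝕜] F} (h : ∀ i, f (v i) = g (v i)) : f = g :=
  ContinuousLinearMap.ext_on (Submodule.dense_iff_topologicalClosure_eq_top.2 v.dense_span)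
    (Set.forall_mem_range.2 h)

theorem exists_continuousLinearEquiv_apply_eq_smul {r : ι → 𝕜} (hr : Memℓp r ∞)
    (hr_inv : Memℓp (fun i => (r i)⁻¹) ∞) (hr0 : ∀ i, r i ≠ 0) :
    ∃ V : H ≃L[𝕜] H, ∀ i, V (v i) = r i • v i := by
  classical
  let u : (lp (fun _ : ι => 𝕜) ∞)ˣ :=
    ⟨⟨r, hr⟩, ⟨_, hr_inv⟩, lp.ext <| funext fun i => mul_inv_cancel₀ (hr0 i),
      lp.ext <| funext fun i => inv_mul_cancel₀ (hr0 i)⟩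
  refine ⟨v.repr.toContinuousLinearEquiv.trans
    ((lp.diagonalEquiv _ 2 u).trans v.repr.symm.toContinuousLinearEquiv), fun i => ?_⟩
  change v.repr.symm (lp.diagonal _ 2 _ (v.repr (v i))) = _
  rw [v.repr_self, lp.diagonal_single, lp.single_smul, map_smul, v.repr_symm_single]

end HilbertBasis

section WeightedShift

variable {𝕜 H : Type*} [RCLike 𝕜] [NormedAddCommGroup H] [InnerProductSpace 𝕜 H]
  (v : HilbertBasis ℕ 𝕜 H) {a b : ℕ → 𝕜} {A B X : H →L[𝕜] H}

theorem inner_zero_weightedShift (hA : ∀ n, A (v n) = a n • v (n + 1)) (x : H) :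
    ⟪v 0, A x⟫_𝕜 = 0 := by
  suffices innerSL 𝕜 (v 0) ∘L A = 0 from congr($this x)
  refine v.continuousLinearMap_ext fun n => ?_
  simp [hA, orthonormal_iff_ite.mp v.orthonormal]

theorem inner_succ_weightedShift (hA : ∀ n, A (v n) = a n • v (n + 1)) (m : ℕ) (x : H) :
    ⟪v (m + 1), A x⟫_𝕜 = a m * ⟪v m, x⟫_𝕜 := by
  suffices innerSL 𝕜 (v (m + 1)) ∘L A = a m • innerSL 𝕜 (v m) from congr($this x)
  refine v.continuousLinearMap_ext fun n => ?_
  by_cases h : m = n <;> simp [h, hA, orthonormal_iff_ite.mp v.orthonormal, v.orthonormal.1 _]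

section Intertwiner

variable (hA : ∀ n, A (v n) = a n • v (n + 1)) (hB : ∀ n, B (v n) = b n • v (n + 1))
  (hX : A ∘L X = X ∘L B)
include hA hB hX

theorem inner_zero_intertwiner_succ (hb : ∀ n, b n ≠ 0) (n : ℕ) :
    ⟪v 0, X (v (n + 1))⟫_𝕜 = 0 := by
  have h := inner_zero_weightedShift v hA (X (v n))
  rw [← ContinuousLinearMap.comp_apply, hX, ContinuousLinearMap.comp_apply, hB, map_smul,
    inner_smul_right] at h
  exact (mul_eq_zero.1 h).resolve_left (hb n)

theorem inner_zero_intertwiner_zero_ne_zero (hb : ∀ n, b n ≠ 0) (hXd : DenseRange X) :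
    ⟪v 0, X (v 0)⟫_𝕜 ≠ 0 := by
  intro h0
  have hvanish : innerSL 𝕜 (v 0) ∘L X = 0 := v.continuousLinearMap_ext fun n => by
    cases n with
    | zero => simpa using h0
    | succ n => simpa using inner_zero_intertwiner_succ v hA hB hX hb n
  have : innerSL 𝕜 (v 0) = 0 :=
    ContinuousLinearMap.ext fun x => hXd.induction_on x (isClosed_eq (by fun_prop) (by fun_prop))
      fun y => congr($hvanish y)
  exact v.orthonormal.ne_zero 0 (by simpa using congr($this (v 0)))

theorem prod_mul_inner_intertwiner (n : ℕ) :
    (∏ k ∈ range n, b k) * ⟪v n, X (v n)⟫_𝕜 = (∏ k ∈ range n, a k) * ⟪v 0, X (v 0)⟫_𝕜 := by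
  induction n with
  | zero => simp
  | succ m ih =>
    have step : b m * ⟪v (m + 1), X (v (m + 1))⟫_𝕜 = a m * ⟪v m, X (v m)⟫_𝕜 := by
      rw [← inner_succ_weightedShift v hA, ← ContinuousLinearMap.comp_apply, hX,
        ContinuousLinearMap.comp_apply, hB, map_smul, inner_smul_right]
    rw [prod_range_succ, prod_range_succ]
    linear_combination (∏ k ∈ range m, b k) * step + a m * ih

theorem exists_norm_prod_le_mul_norm_prod_of_intertwiner (hb : ∀ n, b n ≠ 0)
    (hXd : DenseRange X) : ∃ C, ∀ n, ‖∏ k ∈ range n, a k‖ ≤ C * ‖∏ k ∈ range n, b k‖ := by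
  have hx₀ : 0 < ‖⟪v 0, X (v 0)⟫_𝕜‖ :=
    norm_pos_iff.2 (inner_zero_intertwiner_zero_ne_zero v hA hB hX hb hXd)
  refine ⟨‖X‖ / ‖⟪v 0, X (v 0)⟫_𝕜‖, fun n => ?_⟩
  have hxn : ‖⟪v n, X (v n)⟫_𝕜‖ ≤ ‖X‖ :=
    calc _ ≤ ‖v n‖ * ‖X (v n)‖ := norm_inner_le_norm _ _
      _ ≤ ‖X‖ := by simpa [v.orthonormal.1 n] using X.le_opNorm (v n)
  have h := congr(‖$(prod_mul_inner_intertwiner v hA hB hX n)‖)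
  rw [norm_mul, norm_mul] at h
  rw [div_mul_eq_mul_div, le_div_iff₀ hx₀]
  calc _ = ‖∏ k ∈ range n, b k‖ * ‖⟪v n, X (v n)⟫_𝕜‖ := h.symm
    _ ≤ ‖∏ k ∈ range n, b k‖ * ‖X‖ := by gcongr
    _ = _ := mul_comm _ _

end Intertwiner

theorem exists_similar_weightedShift_of_norm_prod_le (ha : ∀ n, a n ≠ 0) (hb : ∀ n, b n ≠ 0)
    (hA : ∀ n, A (v n) = a n • v (n + 1)) (hB : ∀ n, B (v n) = b n • v (n + 1))
    (hab : ∃ C, ∀ n, ‖∏ k ∈ range n, a k‖ ≤ C * ‖∏ k ∈ range n, b k‖)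
    (hba : ∃ C, ∀ n, ‖∏ k ∈ range n, b k‖ ≤ C * ‖∏ k ∈ range n, a k‖) :
    ∃ V : H ≃L[𝕜] H, (V : H →L[𝕜] H) ∘L A = B ∘L (V : H →L[𝕜] H) := by
  set α : ℕ → 𝕜 := fun n => ∏ k ∈ range n, a k
  set β : ℕ → 𝕜 := fun n => ∏ k ∈ range n, b k
  have hα : ∀ n, α n ≠ 0 := fun n => prod_ne_zero_iff.2 fun k _ => ha k
  have hβ : ∀ n, β n ≠ 0 := fun n => prod_ne_zero_iff.2 fun k _ => hb k
  obtain ⟨C, hC⟩ := hab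
  obtain ⟨C', hC'⟩ := hba
  obtain ⟨V, hV⟩ := v.exists_continuousLinearEquiv_apply_eq_smul (r := fun n => β n / α n)
    (memℓp_infty_iff.2 ⟨C', Set.forall_mem_range.2 fun n => by
      rw [norm_div, div_le_iff₀ (norm_pos_iff.2 (hα n))]; exact hC' n⟩)
    (memℓp_infty_iff.2 ⟨C, Set.forall_mem_range.2 fun n => by
      rw [inv_div, norm_div, div_le_iff₀ (norm_pos_iff.2 (hβ n))]; exact hC n⟩)
    fun n => div_ne_zero (hβ n) (hα n)
  refine ⟨V, v.continuousLinearMap_ext fun n => ?_⟩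
  have hscal : a n * (β (n + 1) / α (n + 1)) = β n / α n * b n := by
    simp only [α, β, prod_range_succ]
    field_simp [ha n, hα n]
  simp [hA, hB, hV, smul_smul, hscal]

end WeightedShift

theorem stmt13_general {H : Type*} [NormedAddCommGroup H] [InnerProductSpace ℂ H] [CompleteSpace H]
    (e : ℕ → H) (he : Orthonormal ℂ e)
    (hdense : (Submodule.span ℂ (Set.range e)).topologicalClosure = ⊤)
    (a b : ℕ → ℝ) (ha : ∀ n, 0 < a n) (hb : ∀ n, 0 < b n)
    (A B : H →L[ℂ] H)
    (hA : ∀ n, A (e n) = (a n : ℂ) • e (n + 1))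
    (hB : ∀ n, B (e n) = (b n : ℂ) • e (n + 1))
    (X Y : H →L[ℂ] H)
    (hXdr : DenseRange X)
    (hYdr : DenseRange Y)
    (hXint : A ∘L X = X ∘L B) (hYint : Y ∘L A = B ∘L Y) :
    ∃ V : H ≃L[ℂ] H, (V : H →L[ℂ] H) ∘L A = B ∘L (V : H →L[ℂ] H) := by
  let v := HilbertBasis.mk he hdense.ge
  rw [← HilbertBasis.coe_mk he hdense.ge] at hA hB
  have ha' (n : ℕ) : (a n : ℂ) ≠ 0 := Complex.ofReal_ne_zero.2 (ha n).ne'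
  have hb' (n : ℕ) : (b n : ℂ) ≠ 0 := Complex.ofReal_ne_zero.2 (hb n).ne'
  exact exists_similar_weightedShift_of_norm_prod_le v ha' hb' hA hB
    (exists_norm_prod_le_mul_norm_prod_of_intertwiner v hA hB hXint hb' hXdr)
    (exists_norm_prod_le_mul_norm_prod_of_intertwiner v hB hA hYint.symm ha' hYdr)

/-- Two injective unilateral (forward) weighted shifts with positive weight
sequences that are quasi-similar are similar. -/
theorem stmt13 {H : Type*} [NormedAddCommGroup H] [InnerProductSpace ℂ H] [CompleteSpace H]
    (e : ℕ → H) (he : Orthonormal ℂ e)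
    (hdense : (Submodule.span ℂ (Set.range e)).topologicalClosure = ⊤)
    (a b : ℕ → ℝ) (ha : ∀ n, 0 < a n) (hb : ∀ n, 0 < b n)
    (A B : H →L[ℂ] H)
    (hA : ∀ n, A (e n) = (a n : ℂ) • e (n + 1))
    (hB : ∀ n, B (e n) = (b n : ℂ) • e (n + 1))
    (X Y : H →L[ℂ] H)
    (hXinj : Function.Injective X) (hXdr : DenseRange X)
    (hYinj : Function.Injective Y) (hYdr : DenseRange Y)
    (hXint : A ∘L X = X ∘L B) (hYint : Y ∘L A = B ∘L Y) :
    ∃ V : H ≃L[ℂ] H, (V : H →L[ℂ] H) ∘L A = B ∘L (V : H →L[ℂ] H) :=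
  stmt13_general e he hdense a b ha hb A B hA hB X Y hXdr hYdr hXint hYint
end
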